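/- arXiv:1804.06133 — 7 statements merged into one kernel-verified Lean document; each statement's English description precedes it below -/
import Mathlib

section
/- Let (E,d) be a complete separable metric space with a Borel probability measure μ and let c > 0 be the universal constant of the multi-set concentration theorem. Let A₁,…,A_k be measurable sets with (μ(A₁),…,μ(A_k)) ∈ Δ_k, set r = (1/2)·min_{i≠j} d(A_i,A_j), assume r > 0, and let A₀ = E \ (A₁ ∪ ⋯ ∪ A_k)_r. Then λ^{(k)} ≤ (1/r²)·ψ((1/c)·min_{1≤i≤k} log(μ(A_i)/μ(A₀))), where ψ(x) = max(x, x²). -/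
open MeasureTheory Filter Topology
open scoped ENNReal NNReal

noncomputable def localLip {E : Type*} [MetricSpace E] (f : E → ℝ) (x : E) : ℝ≥0∞ :=
  Filter.limsup (fun y => ENNReal.ofReal (|f x - f y| / dist x y)) (𝓝[≠] x)

noncomputable def lambdaK {E : Type*} [MetricSpace E] [MeasurableSpace E]
    (μ : Measure E) (k : ℕ) : ℝ :=
  (⨅ (V : Submodule ℝ (E → ℝ)) (_ : Module.finrank ℝ V = k + 1)
      (_ : ∀ f ∈ V, MemLp f 2 μ ∧ (∫⁻ x, (localLip f x) ^ 2 ∂μ) < ⊤),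
    ⨆ (f : E → ℝ) (_ : f ∈ V) (_ : f ≠ 0),
      (∫⁻ x, (localLip f x) ^ 2 ∂μ) / (∫⁻ x, ENNReal.ofReal ((f x) ^ 2) ∂μ)).toReal

noncomputable def distSet {E : Type*} [MetricSpace E] (A B : Set E) : ℝ :=
  sInf (Set.image2 dist A B)

def memDelta {k : ℕ} (a : Fin k → ℝ) : Prop :=
  (∀ i, 0 ≤ a i ∧ a i ≤ 1) ∧ (∑ j, a j) ≤ 1 ∧ (∀ i, 1 ≤ a i + ∑ j, a j)

noncomputable def minPairDist {E : Type*} [MetricSpace E] {k : ℕ} (A : Fin k → Set E) : ℝ :=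
  sInf {d : ℝ | ∃ i j : Fin k, i ≠ j ∧ d = distSet (A i) (A j)}

universe u

/-- The statement of the multi-set concentration theorem, with constant `c`. -/
def MultiSetConc (c : ℝ) : Prop :=
  ∀ (E : Type u) [MetricSpace E] [MeasurableSpace E] [BorelSpace E]
    [CompleteSpace E] [TopologicalSpace.SeparableSpace E]
    (μ : Measure E) [IsProbabilityMeasure μ]
    (k : ℕ), 1 ≤ k →
    ∀ A : Fin k → Set E, (∀ i, MeasurableSet (A i)) →
    (∀ i j, i ≠ j → 0 < distSet (A i) (A j)) →
    memDelta (fun i => (μ (A i)).toReal) →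
    ∀ r : ℝ, 0 < r → (∀ i j, i ≠ j → 2 * r ≤ distSet (A i) (A j)) →
    1 - (1 - (μ (⋃ i, A i)).toReal) *
        Real.exp (-(c * min (r ^ 2 * lambdaK μ k) (r * Real.sqrt (lambdaK μ k)))) ≤
      (μ (Metric.thickening r (⋃ i, A i))).toReal

noncomputable def psiR (x : ℝ) : ℝ := max x (x ^ 2)

/-!
The concentration inequality, applied at radius `r`, reads
`1 - μ(A₀) ≥ 1 - (1 - ∑ⱼ μ(Aⱼ)) e^{-c m}` with `m = min (r² λ⁽ᵏ⁾) (r √λ⁽ᵏ⁾)`.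
The condition `μ(Aᵢ) + ∑ⱼ μ(Aⱼ) ≥ 1` of `Δ_k` says `1 - ∑ⱼ μ(Aⱼ) ≤ μ(Aᵢ)`, so `μ(A₀) ≤ μ(Aᵢ) e^{-c m}`,
i.e. `c m ≤ log (μ(Aᵢ) / μ(A₀))` for every `i`. Hence `m ≤ L := (1/c) minᵢ log (μ(Aᵢ) / μ(A₀))`,
and solving for `λ⁽ᵏ⁾` in either branch of the minimum gives `λ⁽ᵏ⁾ ≤ max L L² / r²`.
-/

section SetDistance

variable {E : Type*} [MetricSpace E]

lemma distSet_nonneg (A B : Set E) : 0 ≤ distSet A B :=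
  Real.sInf_nonneg (by rintro _ ⟨x, -, y, -, rfl⟩; exact dist_nonneg)

lemma distSet_le_dist {A B : Set E} {x y : E} (hx : x ∈ A) (hy : y ∈ B) :
    distSet A B ≤ dist x y :=
  csInf_le ⟨0, by rintro _ ⟨x, -, y, -, rfl⟩; exact dist_nonneg⟩ (Set.mem_image2_of_mem hx hy)

lemma disjoint_of_distSet_pos {A B : Set E} (h : 0 < distSet A B) : Disjoint A B :=
  Set.disjoint_left.2 fun x hxA hxB => h.not_ge ((distSet_le_dist hxA hxB).trans_eq (dist_self x))

lemma minPairDist_le_distSet {k : ℕ} (A : Fin k → Set E) {i j : Fin k} (hij : i ≠ j) :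
    minPairDist A ≤ distSet (A i) (A j) :=
  csInf_le ⟨0, by rintro _ ⟨i, j, -, rfl⟩; exact distSet_nonneg _ _⟩ ⟨i, j, hij, rfl⟩

end SetDistance

lemma le_log_div_of_le_mul_exp_neg {a b t : ℝ} (hb : 0 < b) (h : b ≤ a * Real.exp (-t)) :
    t ≤ Real.log (a / b) := by
  have ha : 0 < a := pos_of_mul_pos_left (hb.trans_le h) (Real.exp_pos _).le
  rw [Real.le_log_iff_exp_le (div_pos ha hb), le_div_iff₀ hb]
  calc Real.exp t * b ≤ Real.exp t * (a * Real.exp (-t)) := by gcongr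
    _ = a := by rw [mul_left_comm, ← Real.exp_add, add_neg_cancel, Real.exp_zero, mul_one]

lemma le_one_div_sq_mul_psiR_of_min_le {l r L : ℝ} (hl : 0 ≤ l) (hr : 0 < r)
    (h : min (r ^ 2 * l) (r * Real.sqrt l) ≤ L) : l ≤ 1 / r ^ 2 * psiR L := by
  rw [one_div_mul_eq_div, le_div_iff₀ (by positivity), psiR]
  rcases min_le_iff.1 h with hquad | hlin
  · linarith [le_max_left L (L ^ 2)]
  · have hsq : (r * Real.sqrt l) ^ 2 ≤ L ^ 2 := pow_le_pow_left₀ (by positivity) hlin 2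
    rw [mul_pow, Real.sq_sqrt hl] at hsq
    linarith [le_max_right L (L ^ 2)]

lemma measure_compl_thickening_le_of_multiSetConc {E : Type u} [MetricSpace E]
    [MeasurableSpace E] [BorelSpace E] [CompleteSpace E] [TopologicalSpace.SeparableSpace E]
    (μ : Measure E) [IsProbabilityMeasure μ] {c : ℝ} (hthm : MultiSetConc.{u} c)
    {k : ℕ} (hk : 1 ≤ k) {A : Fin k → Set E} (hA : ∀ i, MeasurableSet (A i))
    (hΔ : memDelta (fun i => (μ (A i)).toReal)) {r : ℝ} (hr : 0 < r)
    (h2r : ∀ i j, i ≠ j → 2 * r ≤ distSet (A i) (A j)) (i : Fin k) :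
    (μ (Metric.thickening r (⋃ i, A i))ᶜ).toReal ≤
      (μ (A i)).toReal *
        Real.exp (-(c * min (r ^ 2 * lambdaK μ k) (r * Real.sqrt (lambdaK μ k)))) := by
  have hpos : ∀ i j, i ≠ j → 0 < distSet (A i) (A j) := fun i j hij =>
    by linarith [h2r i j hij]
  have hconc := hthm E μ k hk A hA hpos hΔ r hr h2r
  have hunion : (μ (⋃ i, A i)).toReal = ∑ j, (μ (A j)).toReal :=
    measureReal_iUnion_fintype (fun i j hij => disjoint_of_distSet_pos (hpos i j hij)) hA
  have hcompl : (μ (Metric.thickening r (⋃ i, A i))ᶜ).toReal =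
      1 - (μ (Metric.thickening r (⋃ i, A i))).toReal := by
    simp only [← measureReal_def]
    rw [measureReal_compl Metric.isOpen_thickening.measurableSet, probReal_univ]
  have hgap : 1 - (μ (⋃ i, A i)).toReal ≤ (μ (A i)).toReal := by
    rw [hunion]; linarith [hΔ.2.2 i]
  calc (μ (Metric.thickening r (⋃ i, A i))ᶜ).toReal
      ≤ (1 - (μ (⋃ i, A i)).toReal) *
          Real.exp (-(c * min (r ^ 2 * lambdaK μ k) (r * Real.sqrt (lambdaK μ k)))) := by
        linarith
    _ ≤ _ := by gcongr

theorem stmt2_general {E : Type u} [MetricSpace E] [MeasurableSpace E] [BorelSpace E]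
    [CompleteSpace E] [TopologicalSpace.SeparableSpace E]
    (μ : Measure E) [IsProbabilityMeasure μ]
    (c : ℝ) (hc : 0 < c) (hthm : MultiSetConc.{u} c)
    (k : ℕ) (hk : 1 ≤ k) (A : Fin k → Set E) (hA : ∀ i, MeasurableSet (A i))
    (hΔ : memDelta (fun i => (μ (A i)).toReal))
    (r : ℝ) (hr : r = 1 / 2 * minPairDist A) (hrpos : 0 < r)
    (A0 : Set E) (hA0 : A0 = (Metric.thickening r (⋃ i, A i))ᶜ)
    (hA0pos : 0 < (μ A0).toReal) :
    lambdaK μ k ≤ 1 / r ^ 2 *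
      psiR ((1 / c) * ⨅ i : Fin k, Real.log ((μ (A i)).toReal / (μ A0).toReal)) := by
  have h2r : ∀ i j, i ≠ j → 2 * r ≤ distSet (A i) (A j) := fun i j hij => by
    linarith [minPairDist_le_distSet A hij]
  have : Nonempty (Fin k) := ⟨⟨0, hk⟩⟩
  have hlog : c * min (r ^ 2 * lambdaK μ k) (r * Real.sqrt (lambdaK μ k)) ≤
      ⨅ i : Fin k, Real.log ((μ (A i)).toReal / (μ A0).toReal) :=
    le_ciInf fun i => le_log_div_of_le_mul_exp_neg hA0pos <| hA0 ▸
      measure_compl_thickening_le_of_multiSetConc μ hthm hk hA hΔ hrpos h2r i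
  refine le_one_div_sq_mul_psiR_of_min_le ENNReal.toReal_nonneg hrpos ?_
  rw [one_div_mul_eq_div]
  exact (le_div_iff₀' hc).2 hlog

/-- Bound on `λ⁽ᵏ⁾` obtained by inverting the multi-set concentration estimate. -/
theorem stmt2 {E : Type u} [MetricSpace E] [MeasurableSpace E] [BorelSpace E]
    [CompleteSpace E] [TopologicalSpace.SeparableSpace E]
    (μ : Measure E) [IsProbabilityMeasure μ]
    (c : ℝ) (hc : 0 < c) (hthm : MultiSetConc.{u} c)
    (k : ℕ) (hk : 1 ≤ k) (A : Fin k → Set E) (hA : ∀ i, MeasurableSet (A i))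
    (hΔ : memDelta (fun i => (μ (A i)).toReal))
    (hApos : ∀ i, 0 < (μ (A i)).toReal)
    (r : ℝ) (hr : r = 1 / 2 * minPairDist A) (hrpos : 0 < r)
    (A0 : Set E) (hA0 : A0 = (Metric.thickening r (⋃ i, A i))ᶜ)
    (hA0pos : 0 < (μ A0).toReal) :
    lambdaK μ k ≤ 1 / r ^ 2 *
      psiR ((1 / c) * ⨅ i : Fin k, Real.log ((μ (A i)).toReal / (μ A0).toReal)) :=
  stmt2_general μ c hc hthm k hk A hA hΔ r hr hrpos A0 hA0 hA0pos
end

section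
/- Let (E,d) be a metric space, A ⊆ E, ε > 0 and p > 1. Define f(x) = χ_p(d(x,A)/ε) for x ∈ E, where χ_p(x) = (1−x^p)^p for x ∈ [0,1] and χ_p(x) = 0 for x > 1, and d(x,A) = inf_{y∈A} d(x,y). Then for all x ∈ E, the local Lipschitz constant satisfies |∇f|(x) ≤ p²·ε^{−1}·𝟙_{A_ε \ A}(x). -/
open MeasureTheory Filter Topology
open scoped ENNReal

/-- The profile `χ_p(x) = (1 - x^p)^p` for `0 ≤ x ≤ 1`, and `0` for `x > 1`. -/
noncomputable def chiP (p x : ℝ) : ℝ := if x ≤ 1 then (1 - x ^ p) ^ p else 0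

/-!
`χ_p` is `p²`-Lipschitz on `[0, ∞)`, being `(· ^ p) ∘ (1 - ·) ∘ (· ^ p) ∘ (min · 1)` with
factors `p`-, `1`-, `p`- and `1`-Lipschitz on `[0, 1]`; since `y ↦ d(y, A) / ε` is
`ε⁻¹`-Lipschitz, this gives the bound `p² / ε` everywhere. Off `A_ε \ A` we have `d(x, A) = 0`
or `d(x, A) ≥ ε`, and there, by Bernoulli's inequality, `χ_p` is flat to order `p > 1`:
`|χ_p(s) - χ_p(t)| ≤ p^p |s - t|^p`. Hence the difference quotients of `f` at `x` are
`O(d(x, y)^(p - 1))` and tend to `0`.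
-/

open Set Metric
open scoped NNReal

lemma lipschitzOnWith_rpow_Icc {p : ℝ} (hp : 1 ≤ p) :
    LipschitzOnWith p.toNNReal (fun x : ℝ => x ^ p) (Icc 0 1) := by
  refine (convex_Icc 0 1).lipschitzOnWith_of_nnnorm_hasDerivWithin_le
    (fun x _ => (Real.hasDerivAt_rpow_const (Or.inr hp)).hasDerivWithinAt) fun x hx => ?_
  rw [← NNReal.coe_le_coe, coe_nnnorm, Real.coe_toNNReal _ (by linarith), Real.norm_eq_abs,
    abs_of_nonneg (by have := Real.rpow_nonneg hx.1 (p - 1); positivity)]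
  exact mul_le_of_le_one_right (by linarith) (Real.rpow_le_one hx.1 hx.2 (by linarith))

lemma mapsTo_rpow_Icc {p : ℝ} (hp : 0 ≤ p) : MapsTo (fun x : ℝ => x ^ p) (Icc 0 1) (Icc 0 1) :=
  fun _ hx => ⟨Real.rpow_nonneg hx.1 p, Real.rpow_le_one hx.1 hx.2 hp⟩

lemma chiP_eq_rpow_min {p : ℝ} (hp : 0 < p) (x : ℝ) : chiP p x = (1 - min x 1 ^ p) ^ p := by
  unfold chiP
  split_ifs with hx
  · rw [min_eq_left hx]
  · rw [min_eq_right (not_le.1 hx).le, Real.one_rpow, sub_self, Real.zero_rpow hp.ne']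

lemma lipschitzOnWith_chiP {p : ℝ} (hp : 1 ≤ p) :
    LipschitzOnWith (p.toNNReal * p.toNNReal) (chiP p) (Ici 0) := by
  have hp0 : 0 ≤ p := by linarith
  have hmin : LipschitzOnWith 1 (fun x : ℝ => min x 1) (Ici 0) :=
    (LipschitzWith.id.min_const 1).lipschitzOnWith
  have hmin_maps : MapsTo (fun x : ℝ => min x 1) (Ici 0) (Icc 0 1) :=
    fun x hx => ⟨le_min hx zero_le_one, min_le_right x 1⟩
  have hsub : LipschitzOnWith 1 (fun x : ℝ => 1 - x) (Icc 0 1) :=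
    (IsometryEquiv.subLeft (1 : ℝ)).isometry.lipschitz.lipschitzOnWith
  have hsub_maps : MapsTo (fun x : ℝ => 1 - x) (Icc 0 1) (Icc 0 1) :=
    fun x hx => ⟨sub_nonneg.2 hx.2, sub_le_self 1 hx.1⟩
  have hbase : LipschitzOnWith p.toNNReal (fun x : ℝ => 1 - min x 1 ^ p) (Ici 0) := by
    simpa only [one_mul, mul_one, Function.comp_def] using
      hsub.comp ((lipschitzOnWith_rpow_Icc hp).comp hmin hmin_maps)
        ((mapsTo_rpow_Icc hp0).comp hmin_maps)
  rw [funext (chiP_eq_rpow_min (by linarith))]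
  exact (lipschitzOnWith_rpow_Icc hp).comp hbase
    (hsub_maps.comp ((mapsTo_rpow_Icc hp0).comp hmin_maps))

lemma one_sub_rpow_le_mul_one_sub {p s : ℝ} (hp : 1 ≤ p) (hs : 0 ≤ s) :
    1 - s ^ p ≤ p * (1 - s) := by
  have := one_add_mul_self_le_rpow_one_add (s := s - 1) (by linarith) hp
  rw [add_sub_cancel] at this
  linarith

lemma abs_chiP_sub_chiP_zero_le {p s : ℝ} (hp : 1 ≤ p) (hs : 0 ≤ s) :
    |chiP p s - chiP p 0| ≤ p ^ p * s ^ p := by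
  have hp0 : 0 < p := by linarith
  have hpp : 1 ≤ p ^ p := Real.one_le_rpow hp hp0.le
  rw [show chiP p 0 = 1 by simp [chiP, Real.zero_rpow hp0.ne'], abs_sub_comm]
  unfold chiP
  split_ifs with hs1
  · obtain ⟨hsp0, hsp1⟩ := mapsTo_rpow_Icc hp0.le ⟨hs, hs1⟩
    have hχ : (1 - s ^ p) ^ p ≤ 1 :=
      Real.rpow_le_one (sub_nonneg.2 hsp1) (sub_le_self 1 hsp0) hp0.le
    calc |1 - (1 - s ^ p) ^ p| = 1 - (1 - s ^ p) ^ p := abs_of_nonneg (sub_nonneg.2 hχ)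
      _ ≤ p * (1 - (1 - s ^ p)) := one_sub_rpow_le_mul_one_sub hp (sub_nonneg.2 hsp1)
      _ = p * s ^ p := by ring
      _ ≤ p ^ p * s ^ p := by gcongr; exact Real.self_le_rpow_of_one_le hp hp
  · rw [sub_zero, abs_one]
    exact one_le_mul_of_one_le_of_one_le hpp (Real.one_le_rpow (not_le.1 hs1).le hp0.le)

lemma abs_chiP_sub_le_of_one_le {p s t : ℝ} (hp : 1 ≤ p) (hs : 0 ≤ s) (ht : 1 ≤ t) :
    |chiP p s - chiP p t| ≤ p ^ p * |s - t| ^ p := by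
  have hp0 : 0 < p := by linarith
  rw [chiP_eq_rpow_min hp0 t, min_eq_right ht, Real.one_rpow, sub_self, Real.zero_rpow hp0.ne',
    sub_zero]
  unfold chiP
  split_ifs with hs1
  · have hb : 0 ≤ 1 - s ^ p := sub_nonneg.2 (Real.rpow_le_one hs hs1 hp0.le)
    rw [abs_of_nonneg (Real.rpow_nonneg hb p), ← Real.mul_rpow hp0.le (abs_nonneg _)]
    refine Real.rpow_le_rpow hb ?_ hp0.le
    calc 1 - s ^ p ≤ p * (1 - s) := one_sub_rpow_le_mul_one_sub hp hs
      _ ≤ p * |s - t| := by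
        gcongr
        rw [abs_sub_comm]
        exact (by linarith : 1 - s ≤ t - s).trans (le_abs_self _)
  · rw [abs_zero]
    positivity

lemma abs_chiP_sub_le_rpow {p s t : ℝ} (hp : 1 ≤ p) (hs : 0 ≤ s) (ht : t = 0 ∨ 1 ≤ t) :
    |chiP p s - chiP p t| ≤ p ^ p * |s - t| ^ p := by
  rcases ht with rfl | ht
  · simpa [abs_of_nonneg hs] using abs_chiP_sub_chiP_zero_le hp hs
  · exact abs_chiP_sub_le_of_one_le hp hs ht

section MetricSpace

variable {E : Type*} [MetricSpace E]

lemma localLip_le_of_lipschitzWith {f : E → ℝ} {K : ℝ≥0} (hf : LipschitzWith K f) (x : E) :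
    localLip f x ≤ K := by
  refine limsup_le_of_le (by isBoundedDefault) (Eventually.of_forall fun y => ?_)
  rw [ENNReal.ofReal_le_iff_le_toReal ENNReal.coe_ne_top, ENNReal.coe_toReal]
  exact div_le_of_le_mul₀ dist_nonneg K.2 (hf.dist_le_mul x y)

lemma localLip_eq_zero_of_le_rpow {f : E → ℝ} {x : E} {C q : ℝ} (hq : 1 < q)
    (h : ∀ᶠ y in 𝓝 x, |f x - f y| ≤ C * dist x y ^ q) : localLip f x = 0 := by
  rcases eq_or_neBot (𝓝[≠] x) with hbot | _
  · simp [localLip, hbot]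
  have hbound : Tendsto (fun y => C * dist x y ^ (q - 1)) (𝓝[≠] x) (𝓝 0) := by
    have hcont : Continuous fun y => C * dist x y ^ (q - 1) :=
      continuous_const.mul ((continuous_const.dist continuous_id).rpow_const
        fun _ => Or.inr (by linarith))
    simpa [Real.zero_rpow (by linarith : q - 1 ≠ 0)] using
      (hcont.tendsto x).mono_left nhdsWithin_le_nhds
  have hquot : Tendsto (fun y => |f x - f y| / dist x y) (𝓝[≠] x) (𝓝 0) := by
    refine squeeze_zero' (Eventually.of_forall fun y => by positivity) ?_ hbound
    filter_upwards [nhdsWithin_le_nhds h, self_mem_nhdsWithin] with y hy (hyx : y ≠ x)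
    have hd : dist x y ≠ 0 := dist_ne_zero.2 hyx.symm
    rw [Real.rpow_sub_one hd, ← mul_div_assoc]
    exact div_le_div_of_nonneg_right hy dist_nonneg
  simpa [localLip] using (ENNReal.tendsto_ofReal hquot).limsup_eq

lemma lipschitzWith_infDist_div (A : Set E) {ε : ℝ} (hε : 0 ≤ ε) :
    LipschitzWith ε⁻¹.toNNReal (fun y => infDist y A / ε) :=
  LipschitzWith.of_dist_le_mul fun x y => by
    rw [Real.coe_toNNReal _ (inv_nonneg.2 hε), Real.dist_eq, div_sub_div_same, abs_div,
      abs_of_nonneg hε, div_eq_inv_mul]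
    gcongr
    simpa [Real.dist_eq] using (lipschitz_infDist_pt A).dist_le_mul x y

lemma infDist_eq_zero_or_le_of_notMem_thickening_diff {A : Set E} {ε : ℝ} {x : E}
    (hx : x ∉ thickening ε A \ A) : infDist x A = 0 ∨ ε ≤ infDist x A := by
  rw [Set.mem_sdiff, not_and_or, not_not] at hx
  rcases hx with hx | hx
  · rcases A.eq_empty_or_nonempty with rfl | hA
    · simp
    · exact Or.inr (not_lt.1 fun h => hx ((mem_thickening_iff_infDist_lt hA).2 h))
  · exact Or.inl (infDist_zero_of_mem hx)

end MetricSpace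

/-- Lemma `smooth_indicator`: the local Lipschitz constant of
`x ↦ χ_p(d(x,A)/ε)` is at most `p² ε⁻¹ 𝟙_{A_ε \ A}`. -/
theorem stmt7 {E : Type*} [MetricSpace E] (A : Set E) (ε : ℝ) (hε : 0 < ε)
    (p : ℝ) (hp : 1 < p) (x : E) :
    localLip (fun y => chiP p (Metric.infDist y A / ε)) x ≤
      (Metric.thickening ε A \ A).indicator (fun _ => ENNReal.ofReal (p ^ 2 / ε)) x := by
  set g : E → ℝ := fun y => infDist y A / ε
  have hg : LipschitzWith ε⁻¹.toNNReal g := lipschitzWith_infDist_div A hε.le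
  have hg_nonneg : ∀ y, 0 ≤ g y := fun y => div_nonneg infDist_nonneg hε.le
  by_cases hx : x ∈ thickening ε A \ A
  · rw [indicator_of_mem hx]
    have hf := (lipschitzOnWith_chiP hp.le).comp hg.lipschitzOnWith (s := univ)
      fun y _ => hg_nonneg y
    refine (localLip_le_of_lipschitzWith (lipschitzOnWith_univ.1 hf) x).trans_eq ?_
    rw [← ENNReal.ofReal_coe_nnreal]
    push_cast
    rw [Real.coe_toNNReal _ (by linarith), Real.coe_toNNReal _ (inv_nonneg.2 hε.le)]
    congr 1
    ring
  · rw [indicator_of_notMem hx, nonpos_iff_eq_zero]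
    have hflat : g x = 0 ∨ 1 ≤ g x := by
      rcases infDist_eq_zero_or_le_of_notMem_thickening_diff hx with h | h
      · simp [g, h]
      · exact Or.inr ((one_le_div hε).2 h)
    refine localLip_eq_zero_of_le_rpow hp (C := p ^ p * ε⁻¹ ^ p)
      (Eventually.of_forall fun y => ?_)
    have hgy : |g y - g x| ≤ ε⁻¹ * dist x y := by
      simpa only [Real.dist_eq, dist_comm y x, Real.coe_toNNReal _ (inv_nonneg.2 hε.le)] using
        hg.dist_le_mul y x
    calc |chiP p (g x) - chiP p (g y)| = |chiP p (g y) - chiP p (g x)| := abs_sub_comm _ _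
      _ ≤ p ^ p * |g y - g x| ^ p := abs_chiP_sub_le_rpow hp.le (hg_nonneg y) hflat
      _ ≤ p ^ p * (ε⁻¹ * dist x y) ^ p := by gcongr
      _ = p ^ p * ε⁻¹ ^ p * dist x y ^ p := by
        rw [Real.mul_rpow (inv_nonneg.2 hε.le) dist_nonneg, mul_assoc]
end

section
/- Define Ψ : [0,∞) → [0,∞] by Ψ(x) = sup{⌊t⌋·log(1 + x/t²) : t ≥ 1}. Then Ψ(x) ≥ (log 5 / 4)·min(x, √x) for all x ≥ 0. -/
/-!
Every `t ≥ 1` gives the lower bound `⌊t⌋ log(1 + x/t²) ≤ Ψ(x)`, and `log(1 + u) ≤ u` bounds each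
such term by `x`, so the set is bounded above and `sSup` is its true supremum, not a junk value.
For `x ≤ 4` take `t = 1`: by concavity of `log`, `log(1 + x)` lies above its chord `(x/4) log 5`
on `[0, 4]`. For `x > 4` take `t = √x/2`, so that `x/t² = 4` and the term is
`⌊√x/2⌋ log 5 ≥ (√x/4) log 5`, because `⌊u⌋ > u/2` for `u ≥ 1`.
-/

open Real

lemma floor_mul_log_one_add_div_sq_le {x t : ℝ} (hx : 0 ≤ x) (ht : 1 ≤ t) :
    (⌊t⌋ : ℝ) * log (1 + x / t ^ 2) ≤ x := by
  have ht0 : 0 < t := by linarith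
  have hlog_nonneg : 0 ≤ log (1 + x / t ^ 2) := log_nonneg (by linarith [div_nonneg hx (sq_nonneg t)])
  calc (⌊t⌋ : ℝ) * log (1 + x / t ^ 2) ≤ t * (x / t ^ 2) := by
        gcongr
        · exact Int.floor_le t
        · linarith [log_le_sub_one_of_pos (by positivity : 0 < 1 + x / t ^ 2)]
    _ = x / t := by field_simp
    _ ≤ x := div_le_self hx ht

lemma div_mul_log_one_add_le_log_one_add {z c : ℝ} (hz : 0 ≤ z) (hzc : z ≤ c) :
    z / c * log (1 + c) ≤ log (1 + z) := by
  rcases hz.eq_or_lt with rfl | hz0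
  · simp
  have hc0 : 0 < c := hz0.trans_le hzc
  have h := strictConcaveOn_log_Ioi.concaveOn.2 (Set.mem_Ioi.mpr one_pos)
    (Set.mem_Ioi.mpr (by linarith : (0 : ℝ) < 1 + c)) (sub_nonneg.2 ((div_le_one hc0).2 hzc))
    (div_nonneg hz hc0.le) (by ring)
  have hpoint : (1 - z / c) • (1 : ℝ) + (z / c) • (1 + c) = 1 + z := by
    simp only [smul_eq_mul]; field_simp; ring
  rw [hpoint] at h
  simpa using h

/-- Lemma `technique`: the function `Ψ(x) = sup {⌊t⌋ log(1 + x/t²) : t ≥ 1}` satisfies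
`Ψ(x) ≥ (log 5 / 4) min(x, √x)` for all `x ≥ 0`. -/
theorem stmt10 (x : ℝ) (hx : 0 ≤ x) :
    Real.log 5 / 4 * min x (Real.sqrt x) ≤
      sSup {y : ℝ | ∃ t : ℝ, 1 ≤ t ∧ y = (⌊t⌋ : ℝ) * Real.log (1 + x / t ^ 2)} := by
  set S := {y : ℝ | ∃ t : ℝ, 1 ≤ t ∧ y = (⌊t⌋ : ℝ) * Real.log (1 + x / t ^ 2)}
  have hbdd : BddAbove S := ⟨x, by
    rintro y ⟨t, ht, rfl⟩
    exact floor_mul_log_one_add_div_sq_le hx ht⟩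
  have le_sSup_S {t : ℝ} (ht : 1 ≤ t) : (⌊t⌋ : ℝ) * log (1 + x / t ^ 2) ≤ sSup S :=
    le_csSup hbdd ⟨t, ht, rfl⟩
  rcases le_or_gt x 4 with hx4 | hx4
  · calc log 5 / 4 * min x √x ≤ log 5 / 4 * x := by gcongr; exact min_le_left x √x
      _ = x / 4 * log (1 + 4) := by norm_num; ring
      _ ≤ log (1 + x) := div_mul_log_one_add_le_log_one_add hx hx4
      _ = ⌊(1 : ℝ)⌋ * log (1 + x / 1 ^ 2) := by simp
      _ ≤ sSup S := le_sSup_S le_rfl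
  · have hsqrt : 2 < √x := lt_sqrt_of_sq_lt (by linarith)
    have hmin : min x √x = √x := min_eq_right (sqrt_le_self_iff.2 (Or.inr (by linarith)))
    calc log 5 / 4 * min x √x = √x / 2 / 2 * log 5 := by rw [hmin]; ring
      _ ≤ ⌊√x / 2⌋ * log 5 := by
          gcongr; exact (Int.div_two_lt_floor (by linarith)).le
      _ = ⌊√x / 2⌋ * log (1 + x / (√x / 2) ^ 2) := by
          rw [div_pow, sq_sqrt hx]; field_simp; norm_num
      _ ≤ sSup S := le_sSup_S (by linarith)
end

section
/- Let E be a finite set, p an irreducible Markov transition kernel on E admitting a reversible probability measure μ (i.e., p(x,y)·μ(x) = p(y,x)·μ(y) for all x,y), and let d be the graph distance on E induced by the graph with an edge between x and y whenever p(x,y) > 0. Let L = p − I and let λ^{(k)} be the k-th eigenvalue (in increasing order, counted with multiplicity, starting from λ^{(0)} = 0) of the operator −L acting on L²(μ). Then for any k ≥ 1 and all sets A₁,…,A_k ⊆ E with min_{i≠j} d(A_i,A_j) ≥ 1 and (μ(A₁),…,μ(A_k)) ∈ Δ_k, the set B = A₁ ∪ ⋯ ∪ A_k satisfies μ(B_n)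 ≥ 1 − (1 − μ(B))·(1 + λ^{(k)})^{−n} for all integers 1 ≤ n ≤ (1/2)·min_{i≠j} d(A_i,A_j). -/
open scoped BigOperators
open Finset

/-- The measure of a subset of a finite space, for a weight function `μ`. -/
noncomputable def msF {E : Type} [Fintype E] (μ : E → ℝ) (B : Set E) : ℝ :=
  ∑ x, B.indicator μ x

/-- The graph induced by a Markov kernel `p`: `x` and `y` are adjacent when `p x y > 0`. -/
def markovGraph {E : Type} [Fintype E] (p : Matrix E E ℝ) : SimpleGraph E :=
  SimpleGraph.fromRel fun a b => 0 < p a b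

section Aux

variable {E : Type} [Fintype E] [DecidableEq E]

lemma msF_nonneg (μ : E → ℝ) (hμ0 : ∀ x, 0 ≤ μ x) (S : Set E) : 0 ≤ msF μ S :=
  Finset.sum_nonneg fun x _ => Set.indicator_nonneg (fun a _ => hμ0 a) x

lemma msF_mono (μ : E → ℝ) (hμ0 : ∀ x, 0 ≤ μ x) {S T : Set E} (h : S ⊆ T) :
    msF μ S ≤ msF μ T :=
  Finset.sum_le_sum fun x _ => Set.indicator_le_indicator_of_subset h hμ0 x

lemma msF_union (μ : E → ℝ) {S T : Set E}
    (h : ∀ x, x ∈ S → x ∈ T → False) :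
    msF μ (S ∪ T) = msF μ S + msF μ T := by
  classical
  unfold msF
  rw [← Finset.sum_add_distrib]
  refine Finset.sum_congr rfl fun x _ => ?_
  by_cases hs : x ∈ S
  · rw [Set.indicator_of_mem (Set.mem_union_left _ hs), Set.indicator_of_mem hs,
      Set.indicator_of_notMem (fun ht => h x hs ht)]
    ring
  · by_cases ht : x ∈ T
    · rw [Set.indicator_of_mem (Set.mem_union_right _ ht), Set.indicator_of_notMem hs,
        Set.indicator_of_mem ht]
      ring
    · rw [Set.indicator_of_notMem (fun hu => hu.elim hs ht), Set.indicator_of_notMem hs,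
        Set.indicator_of_notMem ht]
      ring

lemma msF_compl (μ : E → ℝ) (S : Set E) : msF μ Sᶜ = (∑ x, μ x) - msF μ S := by
  have h1 : msF μ (S ∪ Sᶜ) = msF μ S + msF μ Sᶜ :=
    msF_union μ (fun x hs hc => hc hs)
  rw [Set.union_compl_self] at h1
  have h2 : msF μ (Set.univ : Set E) = ∑ x, μ x := by
    unfold msF
    exact Finset.sum_congr rfl fun x _ => Set.indicator_of_mem (Set.mem_univ x) μ
  linarith

lemma msF_diff (μ : E → ℝ) {S T : Set E} (h : T ⊆ S) :
    msF μ (S \ T) = msF μ S - msF μ T := by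
  have h1 : msF μ (T ∪ S \ T) = msF μ T + msF μ (S \ T) :=
    msF_union μ (fun x ht hd => hd.2 ht)
  rw [Set.union_diff_cancel h] at h1
  linarith

lemma msF_iUnion (μ : E → ℝ) {k : ℕ} (A : Fin k → Set E)
    (hd : ∀ i j, i ≠ j → ∀ x, x ∈ A i → x ∈ A j → False) :
    msF μ (⋃ i, A i) = ∑ i, msF μ (A i) := by
  classical
  unfold msF
  rw [Finset.sum_comm]
  refine Finset.sum_congr rfl fun x _ => ?_
  by_cases h : ∃ i, x ∈ A i
  · obtain ⟨i0, hi0⟩ := h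
    rw [Set.indicator_of_mem (Set.mem_iUnion.mpr ⟨i0, hi0⟩)]
    rw [Finset.sum_eq_single i0]
    · rw [Set.indicator_of_mem hi0]
    · intro j _ hj
      exact Set.indicator_of_notMem (fun hm => hd j i0 hj x hm hi0) μ
    · intro hx
      exact absurd (Finset.mem_univ i0) hx
  · rw [Set.indicator_of_notMem (fun hm => h (Set.mem_iUnion.mp hm))]
    exact (Finset.sum_eq_zero fun i _ =>
      Set.indicator_of_notMem (fun hm => h ⟨i, hm⟩) μ).symm

end Aux

section Spectral

variable {E : Type} [Fintype E] [DecidableEq E]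

lemma completeness (μ : E → ℝ) (φ : ℕ → E → ℝ)
    (hortho : ∀ i j, i < Fintype.card E → j < Fintype.card E →
      (∑ x, φ i x * φ j x * μ x) = if i = j then 1 else 0) (x y : E) :
    (∑ i : Fin (Fintype.card E), φ i x * μ x * φ i y) = if x = y then 1 else 0 := by
  classical
  set N := Fintype.card E with hN
  let e : Fin N ≃ E := (Fintype.equivFin E).symm
  let A : Matrix (Fin N) E ℝ := fun i z => φ i z
  let B : Matrix E (Fin N) ℝ := fun z i => φ i z * μ z
  have hAB : A * B = 1 := by
    ext i j
    rw [Matrix.mul_apply, Matrix.one_apply]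
    have h1 := hortho i j i.isLt j.isLt
    have h2 : (∑ z, A i z * B z j) = ∑ z, φ (i : ℕ) z * φ (j : ℕ) z * μ z := by
      refine Finset.sum_congr rfl fun z _ => ?_
      show φ i z * (φ j z * μ z) = _
      ring
    rw [h2, h1]
    simp [Fin.val_inj]
  have hBA : B * A = 1 := (Matrix.mul_eq_one_comm_of_equiv e).mp hAB
  have h3 := (Matrix.ext_iff.mpr hBA) x y
  rw [Matrix.mul_apply, Matrix.one_apply] at h3
  have h4 : (∑ i, B x i * A i y) = ∑ i : Fin N, φ i x * μ x * φ i y := by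
    refine Finset.sum_congr rfl fun i _ => ?_
    show φ i x * μ x * φ i y = _
    ring
  rw [h4] at h3
  rw [h3]

lemma spectral (p : Matrix E E ℝ) (μ : E → ℝ)
    (lam : ℕ → ℝ) (φ : ℕ → E → ℝ)
    (hlam0 : lam 0 = 0)
    (hmono : ∀ i j, i ≤ j → j < Fintype.card E → lam i ≤ lam j)
    (hortho : ∀ i j, i < Fintype.card E → j < Fintype.card E →
      (∑ x, φ i x * φ j x * μ x) = if i = j then 1 else 0)
    (heig : ∀ i, i < Fintype.card E → ∀ x, φ i x - ∑ y, p x y * φ i y = lam i * φ i x)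
    (k : ℕ) (hkcard : k < Fintype.card E)
    (f : E → ℝ)
    (horthf : ∀ j, j < k → (∑ x, f x * φ j x * μ x) = 0) :
    lam k * (∑ x, f x ^ 2 * μ x) ≤ ∑ x, f x * (f x - ∑ y, p x y * f y) * μ x := by
  classical
  set N := Fintype.card E with hN
  set a : Fin N → ℝ := fun i => ∑ x, f x * φ i x * μ x with ha
  have hadef : ∀ i : Fin N, a i = ∑ x, f x * φ i x * μ x := fun i => by rw [ha]
  have hexp : ∀ y, f y = ∑ i : Fin N, a i * φ i y := by
    intro y
    have h1 : f y = ∑ x, f x * (if x = y then 1 else 0) := by simp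
    rw [h1]
    calc ∑ x, f x * (if x = y then 1 else 0)
        = ∑ x, f x * (∑ i : Fin N, φ i x * μ x * φ i y) := by
          refine Finset.sum_congr rfl fun x _ => ?_
          rw [completeness μ φ hortho x y]
      _ = ∑ x, ∑ i : Fin N, f x * (φ i x * μ x * φ i y) := by
          refine Finset.sum_congr rfl fun x _ => Finset.mul_sum _ _ _
      _ = ∑ i : Fin N, ∑ x, f x * (φ i x * μ x * φ i y) := Finset.sum_comm
      _ = ∑ i : Fin N, a i * φ i y := by
          refine Finset.sum_congr rfl fun i _ => ?_
          rw [hadef, Finset.sum_mul]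
          exact Finset.sum_congr rfl fun x _ => by ring
  have hnorm : (∑ x, f x ^ 2 * μ x) = ∑ i : Fin N, (a i) ^ 2 := by
    calc (∑ x, f x ^ 2 * μ x) = ∑ x, ∑ i : Fin N, a i * (f x * φ i x * μ x) := by
          refine Finset.sum_congr rfl fun x _ => ?_
          calc f x ^ 2 * μ x = (∑ i : Fin N, a i * φ i x) * (f x * μ x) := by
                rw [← hexp x]; ring
            _ = ∑ i : Fin N, (a i * φ i x) * (f x * μ x) := Finset.sum_mul _ _ _
            _ = ∑ i : Fin N, a i * (f x * φ i x * μ x) :=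
                Finset.sum_congr rfl fun i _ => by ring
      _ = ∑ i : Fin N, ∑ x, a i * (f x * φ i x * μ x) := Finset.sum_comm
      _ = ∑ i : Fin N, (a i) ^ 2 := by
          refine Finset.sum_congr rfl fun i _ => ?_
          rw [← Finset.mul_sum, ← hadef]
          ring
  have hin : ∀ x, (f x - ∑ y, p x y * f y) = ∑ i : Fin N, a i * (lam i * φ i x) := by
    intro x
    calc f x - ∑ y, p x y * f y
        = (∑ i : Fin N, a i * φ i x) - ∑ y, p x y * (∑ i : Fin N, a i * φ i y) := by
          rw [← hexp x]
          congr 1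
          exact Finset.sum_congr rfl fun y _ => by rw [← hexp y]
      _ = (∑ i : Fin N, a i * φ i x) - ∑ i : Fin N, a i * ∑ y, p x y * φ i y := by
          congr 1
          calc ∑ y, p x y * (∑ i : Fin N, a i * φ i y)
              = ∑ y, ∑ i : Fin N, a i * (p x y * φ i y) := by
                refine Finset.sum_congr rfl fun y _ => ?_
                rw [Finset.mul_sum]
                exact Finset.sum_congr rfl fun i _ => by ring
            _ = ∑ i : Fin N, ∑ y, a i * (p x y * φ i y) := Finset.sum_comm
            _ = ∑ i : Fin N, a i * ∑ y, p x y * φ i y := by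
                refine Finset.sum_congr rfl fun i _ => ?_
                rw [← Finset.mul_sum]
      _ = ∑ i : Fin N, (a i * φ i x - a i * ∑ y, p x y * φ i y) := by
          rw [Finset.sum_sub_distrib]
      _ = ∑ i : Fin N, a i * (lam i * φ i x) := by
          refine Finset.sum_congr rfl fun i _ => ?_
          rw [← mul_sub, heig i i.isLt x]
  have hQ : (∑ x, f x * (f x - ∑ y, p x y * f y) * μ x)
      = ∑ i : Fin N, lam i * (a i) ^ 2 := by
    calc (∑ x, f x * (f x - ∑ y, p x y * f y) * μ x)
        = ∑ x, ∑ i : Fin N, (a i * lam i) * (f x * φ i x * μ x) := by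
          refine Finset.sum_congr rfl fun x _ => ?_
          rw [hin x, Finset.mul_sum, Finset.sum_mul]
          exact Finset.sum_congr rfl fun i _ => by ring
      _ = ∑ i : Fin N, ∑ x, (a i * lam i) * (f x * φ i x * μ x) := Finset.sum_comm
      _ = ∑ i : Fin N, lam i * (a i) ^ 2 := by
          refine Finset.sum_congr rfl fun i _ => ?_
          rw [← Finset.mul_sum, ← hadef]
          ring
  rw [hnorm, hQ, Finset.mul_sum]
  refine Finset.sum_le_sum fun i _ => ?_
  rcases lt_or_ge (i : ℕ) k with h | h
  · have hz : a i = 0 := by rw [hadef]; exact horthf i h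
    simp [hz]
  · have h1 := hmono k i h i.isLt
    nlinarith [sq_nonneg (a i)]

lemma exists_dep (k : ℕ) (w : Fin (k + 1) → Fin k → ℝ) :
    ∃ v : Fin (k + 1) → ℝ, (∃ i, v i ≠ 0) ∧ ∀ j, (∑ i, v i * w i j) = 0 := by
  have hni : ¬ LinearIndependent ℝ w := by
    intro h
    have h2 := h.fintype_card_le_finrank
    rw [Module.finrank_fin_fun] at h2
    simp at h2
  obtain ⟨g, hg0, i, hgi⟩ := Fintype.not_linearIndependent_iff.mp hni
  refine ⟨g, ⟨i, hgi⟩, fun j => ?_⟩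
  have h3 := congrFun hg0 j
  simpa [Finset.sum_apply, Pi.smul_apply, smul_eq_mul] using h3

end Spectral

section Key

variable {E : Type} [Fintype E] [DecidableEq E]

lemma key (p : Matrix E E ℝ) (hp0 : ∀ x y, 0 ≤ p x y) (hp1 : ∀ x, ∑ y, p x y = 1)
    (μ : E → ℝ) (hμ0 : ∀ x, 0 ≤ μ x)
    (hrev : ∀ x y, p x y * μ x = p y x * μ y)
    (lam : ℕ → ℝ) (φ : ℕ → E → ℝ)
    (hlam0 : lam 0 = 0)
    (hmono : ∀ i j, i ≤ j → j < Fintype.card E → lam i ≤ lam j)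
    (hortho : ∀ i j, i < Fintype.card E → j < Fintype.card E →
      (∑ x, φ i x * φ j x * μ x) = if i = j then 1 else 0)
    (heig : ∀ i, i < Fintype.card E → ∀ x, φ i x - ∑ y, p x y * φ i y = lam i * φ i x)
    (k : ℕ) (hkcard : k < Fintype.card E)
    (T : Fin (k + 1) → Set E)
    (hdisj : ∀ i j, i ≠ j → ∀ x, x ∈ T i → x ∈ T j → False)
    (hblock : ∀ i j, i ≠ j → ∀ x ∈ T i, ∀ y ∈ T j, p x y = 0)
    (hT0 : ∀ i, msF μ (T 0) ≤ msF μ (T i)) :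
    lam k * msF μ (T 0) ≤ msF μ (⋃ i, T i)ᶜ := by
  classical
  have hlamk : 0 ≤ lam k := by
    have h := hmono 0 k (Nat.zero_le k) hkcard
    rw [hlam0] at h
    exact h
  set χ : Fin (k + 1) → E → ℝ := fun i x => if x ∈ T i then 1 else 0 with hχ
  have hχdef : ∀ i x, χ i x = if x ∈ T i then 1 else 0 := fun i x => by rw [hχ]
  have hχnn : ∀ i x, 0 ≤ χ i x := by
    intro i x; rw [hχdef]; split <;> norm_num
  have hχle1 : ∀ i x, χ i x ≤ 1 := by
    intro i x; rw [hχdef]; split <;> norm_num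
  have hχmul : ∀ i j, i ≠ j → ∀ x, χ i x * χ j x = 0 := by
    intro i j hij x
    by_cases hxi : x ∈ T i
    · by_cases hxj : x ∈ T j
      · exact absurd (hdisj i j hij x hxi hxj) (fun h => h)
      · rw [hχdef j, if_neg hxj]; ring
    · rw [hχdef i, if_neg hxi]; ring
  have hχid : ∀ i x, χ i x * χ i x = χ i x := by
    intro i x; rw [hχdef]; split <;> norm_num
  have hχsum : ∀ x, (∑ i, χ i x) ≤ 1 := by
    intro x
    by_cases h : ∃ i, x ∈ T i
    · obtain ⟨i0, hi0⟩ := h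
      have h1 : (∑ i, χ i x) = χ i0 x := by
        refine Finset.sum_eq_single i0 (fun j _ hj => ?_) (fun h => absurd (Finset.mem_univ i0) h)
        by_cases hxj : x ∈ T j
        · exact absurd (hdisj j i0 hj x hxj hi0) (fun h => h)
        · rw [hχdef, if_neg hxj]
      rw [h1]
      exact hχle1 i0 x
    · have h1 : (∑ i, χ i x) = 0 :=
        Finset.sum_eq_zero fun i _ => by rw [hχdef, if_neg (fun hm => h ⟨i, hm⟩)]
      rw [h1]; norm_num
  have hmsT : ∀ i, msF μ (T i) = ∑ x, χ i x * μ x := by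
    intro i
    unfold msF
    refine Finset.sum_congr rfl fun x _ => ?_
    by_cases h : x ∈ T i
    · rw [Set.indicator_of_mem h, hχdef, if_pos h, one_mul]
    · rw [Set.indicator_of_notMem h, hχdef, if_neg h, zero_mul]
  set γ : E → ℝ := fun y => if ∀ i, y ∉ T i then 1 else 0 with hγ
  have hγdef : ∀ y, γ y = if ∀ i, y ∉ T i then 1 else 0 := fun y => by rw [hγ]
  have hγnn : ∀ y, 0 ≤ γ y := by
    intro y; rw [hγdef]; split <;> norm_num
  have hmsG : msF μ (⋃ i, T i)ᶜ = ∑ y, μ y * γ y := by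
    unfold msF
    refine Finset.sum_congr rfl fun y _ => ?_
    by_cases h : ∀ i, y ∉ T i
    · rw [Set.indicator_of_mem, hγdef, if_pos h, mul_one]
      rw [Set.mem_compl_iff, Set.mem_iUnion]
      exact fun ⟨i, hi⟩ => h i hi
    · rw [Set.indicator_of_notMem, hγdef, if_neg h, mul_zero]
      rw [Set.mem_compl_iff, Set.mem_iUnion, not_not]
      push_neg at h
      obtain ⟨i, hi⟩ := h
      exact ⟨i, hi⟩
  -- coefficient vector
  obtain ⟨v, ⟨i₀, hv0⟩, hvw⟩ := exists_dep k (fun i j => ∑ x, χ i x * φ j x * μ x)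
  set f : E → ℝ := fun x => ∑ i, v i * χ i x with hf
  have hfdef : ∀ x, f x = ∑ i, v i * χ i x := fun x => by rw [hf]
  have horthf : ∀ j, j < k → (∑ x, f x * φ j x * μ x) = 0 := by
    intro j hj
    have h0 := hvw ⟨j, hj⟩
    calc (∑ x, f x * φ j x * μ x)
        = ∑ x, ∑ i, v i * χ i x * φ j x * μ x := by
          refine Finset.sum_congr rfl fun x _ => ?_
          rw [hfdef, Finset.sum_mul, Finset.sum_mul]
      _ = ∑ i, ∑ x, v i * χ i x * φ j x * μ x := Finset.sum_comm
      _ = ∑ i, v i * ∑ x, χ i x * φ j x * μ x := by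
          refine Finset.sum_congr rfl fun i _ => ?_
          rw [Finset.mul_sum]
          exact Finset.sum_congr rfl fun x _ => by ring
      _ = 0 := h0
  have hsp := spectral p μ lam φ hlam0 hmono hortho heig k hkcard f horthf
  -- pointwise square expansion
  have hfsq : ∀ x, f x ^ 2 = ∑ i, (v i) ^ 2 * χ i x := by
    intro x
    rw [hfdef, sq, Finset.sum_mul_sum]
    refine Finset.sum_congr rfl fun i _ => ?_
    refine Finset.sum_eq_single i (fun j _ hj => ?_) (fun h => absurd (Finset.mem_univ i) h) |>.trans ?_
    · have := hχmul i j (fun h => hj h.symm) x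
      calc v i * χ i x * (v j * χ j x) = v i * v j * (χ i x * χ j x) := by ring
        _ = 0 := by rw [this]; ring
    · calc v i * χ i x * (v i * χ i x) = (v i) ^ 2 * (χ i x * χ i x) := by ring
        _ = (v i) ^ 2 * χ i x := by rw [hχid]
  have hnorm : (∑ x, f x ^ 2 * μ x) = ∑ i, (v i) ^ 2 * (∑ x, χ i x * μ x) := by
    calc (∑ x, f x ^ 2 * μ x) = ∑ x, ∑ i, (v i) ^ 2 * (χ i x * μ x) := by
          refine Finset.sum_congr rfl fun x _ => ?_
          rw [hfsq, Finset.sum_mul]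
          exact Finset.sum_congr rfl fun i _ => by ring
      _ = ∑ i, ∑ x, (v i) ^ 2 * (χ i x * μ x) := Finset.sum_comm
      _ = ∑ i, (v i) ^ 2 * (∑ x, χ i x * μ x) := by
          refine Finset.sum_congr rfl fun i _ => ?_
          rw [← Finset.mul_sum]
  -- cross expansion
  have hcross : ∀ x y, μ x * p x y * (f x * f y)
      = ∑ i, (v i) ^ 2 * (μ x * p x y * (χ i x * χ i y)) := by
    intro x y
    rw [hfdef x, hfdef y, Finset.sum_mul_sum]
    rw [Finset.mul_sum]
    refine Finset.sum_congr rfl fun i _ => ?_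
    refine (?_ : μ x * p x y * ∑ j, v i * χ i x * (v j * χ j y) = _)
    rw [Finset.mul_sum]
    refine Finset.sum_eq_single i (fun j _ hj => ?_) (fun h => absurd (Finset.mem_univ i) h) |>.trans ?_
    · by_cases hxi : x ∈ T i
      · by_cases hyj : y ∈ T j
        · rw [hblock i j (fun h => hj h.symm) x hxi y hyj]; ring
        · rw [hχdef j, if_neg hyj]; ring
      · rw [hχdef i, if_neg hxi]; ring
    · ring
  have hX : (∑ x, (∑ y, p x y * f y) * f x * μ x)
      = ∑ i, (v i) ^ 2 * (∑ x, ∑ y, μ x * p x y * (χ i x * χ i y)) := by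
    calc (∑ x, (∑ y, p x y * f y) * f x * μ x)
        = ∑ x, ∑ y, μ x * p x y * (f x * f y) := by
          refine Finset.sum_congr rfl fun x _ => ?_
          rw [Finset.sum_mul, Finset.sum_mul]
          exact Finset.sum_congr rfl fun y _ => by ring
      _ = ∑ x, ∑ y, ∑ i, (v i) ^ 2 * (μ x * p x y * (χ i x * χ i y)) := by
          refine Finset.sum_congr rfl fun x _ => Finset.sum_congr rfl fun y _ => hcross x y
      _ = ∑ x, ∑ i, ∑ y, (v i) ^ 2 * (μ x * p x y * (χ i x * χ i y)) := by
          exact Finset.sum_congr rfl fun x _ => Finset.sum_comm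
      _ = ∑ i, ∑ x, ∑ y, (v i) ^ 2 * (μ x * p x y * (χ i x * χ i y)) := Finset.sum_comm
      _ = ∑ i, (v i) ^ 2 * (∑ x, ∑ y, μ x * p x y * (χ i x * χ i y)) := by
          refine Finset.sum_congr rfl fun i _ => ?_
          rw [Finset.mul_sum]
          exact Finset.sum_congr rfl fun x _ => by rw [← Finset.mul_sum]
  -- D i = m i - W i as a nonnegative double sum
  have hDi : ∀ i, (∑ x, χ i x * μ x) - (∑ x, ∑ y, μ x * p x y * (χ i x * χ i y))
      = ∑ x, ∑ y, μ x * p x y * (χ i x * (1 - χ i y)) := by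
    intro i
    have hmi : (∑ x, χ i x * μ x) = ∑ x, ∑ y, μ x * p x y * χ i x := by
      refine Finset.sum_congr rfl fun x _ => ?_
      rw [show (∑ y, μ x * p x y * χ i x) = (∑ y, p x y) * (μ x * χ i x) by
        rw [Finset.sum_mul]; exact Finset.sum_congr rfl fun y _ => by ring]
      rw [hp1 x]; ring
    rw [hmi, ← Finset.sum_sub_distrib]
    refine Finset.sum_congr rfl fun x _ => ?_
    rw [← Finset.sum_sub_distrib]
    exact Finset.sum_congr rfl fun y _ => by ring
  have hDnn : ∀ i, (0:ℝ) ≤ ∑ x, ∑ y, μ x * p x y * (χ i x * (1 - χ i y)) :=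
    fun i => Finset.sum_nonneg fun x _ => Finset.sum_nonneg fun y _ =>
      mul_nonneg (mul_nonneg (hμ0 x) (hp0 x y))
        (mul_nonneg (hχnn i x) (by linarith [hχle1 i y]))
  have hDle : ∀ i, (∑ x, ∑ y, μ x * p x y * (χ i x * (1 - χ i y)))
      ≤ ∑ x, ∑ y, μ x * p x y * (χ i x * γ y) := by
    intro i
    refine Finset.sum_le_sum fun x _ => Finset.sum_le_sum fun y _ => ?_
    by_cases hy : ∀ j, y ∉ T j
    · rw [hγdef, if_pos hy, hχdef i y, if_neg (hy i)]
      norm_num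
    · push_neg at hy
      obtain ⟨j, hj⟩ := hy
      rw [hγdef, if_neg (by push_neg; exact ⟨j, hj⟩)]
      by_cases hij : j = i
      · subst hij
        rw [hχdef j y, if_pos hj]
        simp
      · by_cases hxi : x ∈ T i
        · rw [hblock i j (fun h => hij h.symm) x hxi y hj]
          simp
        · rw [hχdef i x, if_neg hxi]
          simp
  have hUsum : (∑ i, ∑ x, ∑ y, μ x * p x y * (χ i x * γ y)) ≤ ∑ y, μ y * γ y := by
    calc (∑ i, ∑ x, ∑ y, μ x * p x y * (χ i x * γ y))
        = ∑ x, ∑ i, ∑ y, μ x * p x y * (χ i x * γ y) := Finset.sum_comm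
      _ = ∑ x, ∑ y, ∑ i, μ x * p x y * (χ i x * γ y) := by
          exact Finset.sum_congr rfl fun x _ => Finset.sum_comm
      _ = ∑ x, ∑ y, (μ y * γ y) * (p y x * (∑ i, χ i x)) := by
          refine Finset.sum_congr rfl fun x _ => Finset.sum_congr rfl fun y _ => ?_
          have e1 : (∑ i, μ x * p x y * (χ i x * γ y))
              = (∑ i, χ i x) * (μ x * p x y * γ y) := by
            rw [Finset.sum_mul]
            exact Finset.sum_congr rfl fun i _ => by ring
          rw [e1, show μ x * p x y * γ y = (p x y * μ x) * γ y by ring, hrev x y]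
          ring
      _ ≤ ∑ x, ∑ y, (μ y * γ y) * (p y x * 1) := by
          refine Finset.sum_le_sum fun x _ => Finset.sum_le_sum fun y _ => ?_
          refine mul_le_mul_of_nonneg_left ?_ (mul_nonneg (hμ0 y) (hγnn y))
          exact mul_le_mul_of_nonneg_left (hχsum x) (hp0 y x)
      _ = ∑ y, ∑ x, (μ y * γ y) * (p y x * 1) := Finset.sum_comm
      _ = ∑ y, μ y * γ y := by
          refine Finset.sum_congr rfl fun y _ => ?_
          have e2 : (∑ x, (μ y * γ y) * (p y x * 1)) = (μ y * γ y) * (∑ x, p y x) := by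
            rw [Finset.mul_sum]
            exact Finset.sum_congr rfl fun x _ => by ring
          rw [e2, hp1 y, mul_one]
  obtain ⟨imax, _, himax⟩ :=
    Finset.exists_max_image Finset.univ (fun i => (v i) ^ 2) ⟨i₀, Finset.mem_univ i₀⟩
  have hM0 : 0 < (v imax) ^ 2 :=
    lt_of_lt_of_le (lt_of_le_of_ne (sq_nonneg (v i₀)) (Ne.symm (pow_ne_zero 2 hv0)))
      (himax i₀ (Finset.mem_univ i₀))
  have hLHS : lam k * ((v imax) ^ 2 * (∑ x, χ imax x * μ x))
      ≤ lam k * (∑ x, f x ^ 2 * μ x) := by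
    refine mul_le_mul_of_nonneg_left ?_ hlamk
    rw [hnorm]
    exact Finset.single_le_sum
      (fun i _ => mul_nonneg (sq_nonneg _)
        (Finset.sum_nonneg fun x _ => mul_nonneg (hχnn i x) (hμ0 x)))
      (Finset.mem_univ imax)
  have hRHS : (∑ x, f x * (f x - ∑ y, p x y * f y) * μ x)
      ≤ (v imax) ^ 2 * msF μ (⋃ i, T i)ᶜ := by
    have e2 : (∑ x, f x * (f x - ∑ y, p x y * f y) * μ x)
        = (∑ x, f x ^ 2 * μ x) - (∑ x, (∑ y, p x y * f y) * f x * μ x) := by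
      rw [← Finset.sum_sub_distrib]
      exact Finset.sum_congr rfl fun x _ => by ring
    have e1 : (∑ x, f x * (f x - ∑ y, p x y * f y) * μ x)
        = ∑ i, (v i) ^ 2 * ((∑ x, χ i x * μ x) - ∑ x, ∑ y, μ x * p x y * (χ i x * χ i y)) := by
      rw [e2, hnorm, hX, ← Finset.sum_sub_distrib]
      exact Finset.sum_congr rfl fun i _ => by ring
    rw [e1, hmsG]
    calc (∑ i, (v i) ^ 2 * ((∑ x, χ i x * μ x) - ∑ x, ∑ y, μ x * p x y * (χ i x * χ i y)))
        ≤ ∑ i, (v imax) ^ 2 * (∑ x, ∑ y, μ x * p x y * (χ i x * γ y)) := by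
          refine Finset.sum_le_sum fun i _ => ?_
          have d1 : (∑ x, χ i x * μ x) - (∑ x, ∑ y, μ x * p x y * (χ i x * χ i y))
              ≤ ∑ x, ∑ y, μ x * p x y * (χ i x * γ y) := by
            rw [hDi i]; exact hDle i
          have d2 : (0:ℝ) ≤ (∑ x, χ i x * μ x) - (∑ x, ∑ y, μ x * p x y * (χ i x * χ i y)) := by
            rw [hDi i]; exact hDnn i
          exact mul_le_mul (himax i (Finset.mem_univ i)) d1 d2 (sq_nonneg _)
      _ = (v imax) ^ 2 * (∑ i, ∑ x, ∑ y, μ x * p x y * (χ i x * γ y)) := by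
          rw [Finset.mul_sum]
      _ ≤ (v imax) ^ 2 * (∑ y, μ y * γ y) :=
          mul_le_mul_of_nonneg_left hUsum (sq_nonneg _)
  have hfinal : lam k * ((v imax) ^ 2 * (∑ x, χ imax x * μ x))
      ≤ (v imax) ^ 2 * msF μ (⋃ i, T i)ᶜ := le_trans hLHS (le_trans hsp hRHS)
  have h5 : lam k * (∑ x, χ imax x * μ x) ≤ msF μ (⋃ i, T i)ᶜ := by
    rw [show lam k * ((v imax) ^ 2 * (∑ x, χ imax x * μ x))
        = (v imax) ^ 2 * (lam k * (∑ x, χ imax x * μ x)) by ring] at hfinal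
    exact le_of_mul_le_mul_left hfinal hM0
  calc lam k * msF μ (T 0) ≤ lam k * msF μ (T imax) :=
        mul_le_mul_of_nonneg_left (hT0 imax) hlamk
    _ = lam k * (∑ x, χ imax x * μ x) := by rw [hmsT]
    _ ≤ msF μ (⋃ i, T i)ᶜ := h5

end Key

/-- Theorem `result-markov-chains`: multi-set concentration for a reversible irreducible
Markov chain on a finite state space, in terms of the eigenvalues `λ⁽ᵏ⁾` of `-L = I - p`
on `L²(μ)` (listed in increasing order, with multiplicity, via an orthonormal basis of
eigenfunctions). -/
theorem stmt15 {E : Type} [Fintype E] [DecidableEq E] [Nonempty E]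
    (p : Matrix E E ℝ) (hp0 : ∀ x y, 0 ≤ p x y) (hp1 : ∀ x, ∑ y, p x y = 1)
    (hirr : ∀ x y : E, ∃ n : ℕ, 0 < (p ^ n) x y)
    (μ : E → ℝ) (hμ0 : ∀ x, 0 ≤ μ x) (hμ1 : ∑ x, μ x = 1)
    (hrev : ∀ x y, p x y * μ x = p y x * μ y)
    (lam : ℕ → ℝ) (φ : ℕ → E → ℝ)
    (hlam0 : lam 0 = 0)
    (hmono : ∀ i j, i ≤ j → j < Fintype.card E → lam i ≤ lam j)
    (hortho : ∀ i j, i < Fintype.card E → j < Fintype.card E →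
      (∑ x, φ i x * φ j x * μ x) = if i = j then 1 else 0)
    (heig : ∀ i, i < Fintype.card E → ∀ x, φ i x - ∑ y, p x y * φ i y = lam i * φ i x)
    (k : ℕ) (hk : 1 ≤ k) (hkcard : k < Fintype.card E)
    (A : Fin k → Set E)
    (hsep : ∀ i j, i ≠ j → ∀ x ∈ A i, ∀ y ∈ A j, 1 ≤ (markovGraph p).dist x y)
    (hΔ : memDelta (fun i => msF μ (A i))) :
    ∀ n : ℕ, 1 ≤ n →
      (∀ i j, i ≠ j → ∀ x ∈ A i, ∀ y ∈ A j, 2 * n ≤ (markovGraph p).dist x y) →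
      1 - (1 - msF μ (⋃ i, A i)) * ((1 + lam k) ^ n)⁻¹ ≤
        msF μ {x | ∃ y ∈ ⋃ i, A i, (markovGraph p).dist x y ≤ n} := by
  classical
  intro n hn hsepn
  set G := markovGraph p with hG
  have hlamk : 0 ≤ lam k := by
    have h := hmono 0 k (Nat.zero_le k) hkcard
    rw [hlam0] at h
    exact h
  -- connectivity
  have hadj : ∀ x y : E, x ≠ y → 0 < p x y → G.Adj x y := by
    intro x y hxy hppos
    rw [hG]
    exact (SimpleGraph.fromRel_adj _ x y).mpr ⟨hxy, Or.inl hppos⟩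
  have hpow0 : ∀ (m : ℕ) (x y : E), 0 ≤ (p ^ m) x y := by
    intro m
    induction m with
    | zero =>
      intro x y
      rw [pow_zero]
      by_cases h : x = y <;> simp [Matrix.one_apply, h]
    | succ m ih =>
      intro x y
      rw [pow_succ, Matrix.mul_apply]
      exact Finset.sum_nonneg fun z _ => mul_nonneg (ih x z) (hp0 z y)
  have hreach : ∀ (m : ℕ) (x y : E), 0 < (p ^ m) x y → G.Reachable x y := by
    intro m
    induction m with
    | zero =>
      intro x y h
      rw [pow_zero] at h
      by_cases hxy : x = y
      · exact hxy ▸ SimpleGraph.Reachable.refl x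
      · rw [Matrix.one_apply_ne hxy] at h
        exact absurd h (lt_irrefl 0)
    | succ m ih =>
      intro x y h
      rw [pow_succ, Matrix.mul_apply] at h
      have hz : ∃ z, 0 < (p ^ m) x z * p z y := by
        by_contra hc
        push_neg at hc
        have h2 : (∑ z, (p ^ m) x z * p z y) ≤ 0 := Finset.sum_nonpos fun z _ => hc z
        linarith
      obtain ⟨z, hz⟩ := hz
      have h1 : 0 < (p ^ m) x z := by
        rcases lt_or_ge 0 ((p ^ m) x z) with h' | h'
        · exact h'
        · nlinarith [hp0 z y]
      have h2 : 0 < p z y := by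
        rcases lt_or_ge 0 (p z y) with h' | h'
        · exact h'
        · nlinarith [hpow0 m x z]
      refine (ih x z h1).trans ?_
      by_cases hzy : z = y
      · exact hzy ▸ SimpleGraph.Reachable.refl z
      · exact (hadj z y hzy h2).reachable
  have hconn : G.Connected := by
    rw [SimpleGraph.connected_iff]
    refine ⟨fun x y => ?_, ‹Nonempty E›⟩
    obtain ⟨m, hm⟩ := hirr x y
    exact hreach m x y hm
  have hdistadj : ∀ x y : E, G.Adj x y → G.dist x y ≤ 1 :=
    fun x y h => le_of_eq (SimpleGraph.dist_eq_one_iff_adj.mpr h)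
  -- sets
  set B : Set E := ⋃ i, A i with hB
  set Bm : ℕ → Set E := fun m => {x | ∃ y ∈ B, G.dist x y ≤ m} with hBm
  set S : ℕ → Fin k → Set E := fun m i => {x | ∃ y ∈ A i, G.dist x y ≤ m} with hS
  have hBmdef : ∀ m x, x ∈ Bm m ↔ ∃ y ∈ B, G.dist x y ≤ m := fun m x => Iff.rfl
  have hSdef : ∀ m i x, x ∈ S m i ↔ ∃ y ∈ A i, G.dist x y ≤ m := fun m i x => Iff.rfl
  have hBBm : ∀ m, B ⊆ Bm m := by
    intro m x hx
    exact ⟨x, hx, by rw [SimpleGraph.dist_self]; exact Nat.zero_le m⟩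
  have hAS : ∀ m i, A i ⊆ S m i := by
    intro m i x hx
    exact ⟨x, hx, by rw [SimpleGraph.dist_self]; exact Nat.zero_le m⟩
  have hBmS : ∀ m x, x ∈ Bm m ↔ ∃ i, x ∈ S m i := by
    intro m x
    constructor
    · rintro ⟨y, hy, hd⟩
      obtain ⟨i, hi⟩ := Set.mem_iUnion.mp hy
      exact ⟨i, y, hi, hd⟩
    · rintro ⟨i, y, hi, hd⟩
      exact ⟨y, Set.mem_iUnion.mpr ⟨i, hi⟩, hd⟩
  have hAdisj : ∀ i j, i ≠ j → ∀ x, x ∈ A i → x ∈ A j → False := by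
    intro i j hij x hxi hxj
    have h := hsep i j hij x hxi x hxj
    rw [SimpleGraph.dist_self] at h
    omega
  have hmsB : msF μ B = ∑ i, msF μ (A i) := msF_iUnion μ A hAdisj
  -- one step
  have hstep : ∀ m : ℕ, m + 1 ≤ n →
      (1 + lam k) * msF μ ((Bm (m + 1))ᶜ) ≤ msF μ ((Bm m)ᶜ) := by
    intro m hmn
    set T : Fin (k + 1) → Set E := Fin.cases ((Bm (m + 1))ᶜ) (fun i => S m i) with hT
    have hT0' : T 0 = (Bm (m + 1))ᶜ := rfl
    have hTsucc : ∀ i : Fin k, T i.succ = S m i := fun i => by rw [hT]; simp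
    -- adjacency/equality contradictions
    have hxyS : ∀ (i j : Fin k), i ≠ j → ∀ x ∈ S m i, ∀ y ∈ S m j,
        (x = y ∨ G.Adj x y) → False := by
      intro i j hij x hx y hy hcon
      obtain ⟨a, ha, hax⟩ := hx
      obtain ⟨b, hb, hby⟩ := hy
      have hab := hsepn i j hij a ha b hb
      have hdxy : G.dist x y ≤ 1 := by
        rcases hcon with rfl | hadj'
        · rw [SimpleGraph.dist_self]; omega
        · exact hdistadj x y hadj'
      have t1 : G.dist a b ≤ G.dist a x + G.dist x b := hconn.dist_triangle
      have t2 : G.dist x b ≤ G.dist x y + G.dist y b := hconn.dist_triangle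
      have hax' : G.dist a x ≤ m := by rw [SimpleGraph.dist_comm]; exact hax
      omega
    have hxyC : ∀ (i : Fin k), ∀ x ∈ S m i, ∀ y ∈ (Bm (m + 1))ᶜ,
        (x = y ∨ G.Adj x y) → False := by
      intro i x hx y hyC hcon
      obtain ⟨a, ha, hax⟩ := hx
      have hdyx : G.dist y x ≤ 1 := by
        rcases hcon with rfl | hadj'
        · rw [SimpleGraph.dist_self]; omega
        · rw [SimpleGraph.dist_comm]; exact hdistadj x y hadj'
      have t1 : G.dist y a ≤ G.dist y x + G.dist x a := hconn.dist_triangle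
      refine hyC ⟨a, Set.mem_iUnion.mpr ⟨i, ha⟩, ?_⟩
      omega
    have hdisjT : ∀ i j, i ≠ j → ∀ x, x ∈ T i → x ∈ T j → False := by
      intro i j hij x hxi hxj
      rcases Fin.eq_zero_or_eq_succ i with rfl | ⟨i', rfl⟩ <;>
        rcases Fin.eq_zero_or_eq_succ j with rfl | ⟨j', rfl⟩
      · exact hij rfl
      · rw [hTsucc] at hxj
        exact hxyC j' x hxj x hxi (Or.inl rfl)
      · rw [hTsucc] at hxi
        exact hxyC i' x hxi x hxj (Or.inl rfl)
      · rw [hTsucc] at hxi hxj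
        have hij' : i' ≠ j' := fun h => hij (by rw [h])
        exact hxyS i' j' hij' x hxi x hxj (Or.inl rfl)
    have hblockT : ∀ i j, i ≠ j → ∀ x ∈ T i, ∀ y ∈ T j, p x y = 0 := by
      intro i j hij x hxi y hyj
      by_contra hne
      have hppos : 0 < p x y := lt_of_le_of_ne (hp0 x y) (Ne.symm hne)
      by_cases hxy : x = y
      · exact hdisjT i j hij x hxi (hxy ▸ hyj)
      have hadj' := hadj x y hxy hppos
      rcases Fin.eq_zero_or_eq_succ i with rfl | ⟨i', rfl⟩ <;>
        rcases Fin.eq_zero_or_eq_succ j with rfl | ⟨j', rfl⟩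
      · exact hij rfl
      · rw [hTsucc] at hyj
        exact hxyC j' y hyj x hxi (Or.inr hadj'.symm)
      · rw [hTsucc] at hxi
        exact hxyC i' x hxi y hyj (Or.inr hadj')
      · rw [hTsucc] at hxi hyj
        have hij' : i' ≠ j' := fun h => hij (by rw [h])
        exact hxyS i' j' hij' x hxi y hyj (Or.inr hadj')
    have hT0c : ∀ i, msF μ (T 0) ≤ msF μ (T i) := by
      intro i
      rcases Fin.eq_zero_or_eq_succ i with rfl | ⟨i', rfl⟩
      · exact le_refl _
      rw [hT0', hTsucc]
      have hc1 : msF μ ((Bm (m + 1))ᶜ) ≤ msF μ Bᶜ :=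
        msF_mono μ hμ0 (Set.compl_subset_compl.mpr (hBBm (m + 1)))
      have hc2 : msF μ Bᶜ = 1 - msF μ B := by rw [msF_compl, hμ1]
      have hc3 := hΔ.2.2 i'
      simp only [] at hc3
      have hc4 : 1 - msF μ B ≤ msF μ (A i') := by
        rw [hmsB]; linarith
      have hc5 : msF μ (A i') ≤ msF μ (S m i') := msF_mono μ hμ0 (hAS m i')
      linarith
    have hkey := key p hp0 hp1 μ hμ0 hrev lam φ hlam0 hmono hortho heig k hkcard
      T hdisjT hblockT hT0c
    rw [hT0'] at hkey
    have hset : (⋃ i, T i)ᶜ = (Bm m)ᶜ \ (Bm (m + 1))ᶜ := by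
      ext x
      simp only [Set.mem_compl_iff, Set.mem_iUnion, Set.mem_diff, not_exists]
      constructor
      · intro h
        have h0 : x ∉ T 0 := h 0
        rw [hT0', Set.mem_compl_iff, not_not] at h0
        have h1 : x ∉ Bm m := by
          intro hx
          obtain ⟨i, hi⟩ := (hBmS m x).mp hx
          have := h i.succ
          rw [hTsucc] at this
          exact this hi
        exact ⟨h1, fun hc => hc h0⟩
      · rintro ⟨h1, h2⟩ i
        rcases Fin.eq_zero_or_eq_succ i with rfl | ⟨i', rfl⟩
        · rw [hT0', Set.mem_compl_iff, not_not]
          by_contra hc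
          exact h2 hc
        · rw [hTsucc]
          intro hc
          exact h1 ((hBmS m x).mpr ⟨i', hc⟩)
    have hsub : (Bm (m + 1))ᶜ ⊆ (Bm m)ᶜ :=
      Set.compl_subset_compl.mpr (fun x ⟨y, hy, hd⟩ => ⟨y, hy, by omega⟩)
    have hdiff : msF μ ((Bm m)ᶜ \ (Bm (m + 1))ᶜ)
        = msF μ ((Bm m)ᶜ) - msF μ ((Bm (m + 1))ᶜ) := msF_diff μ hsub
    rw [hset, hdiff] at hkey
    linarith
  -- iterate
  have hiter : ∀ m : ℕ, m ≤ n →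
      (1 + lam k) ^ m * msF μ ((Bm m)ᶜ) ≤ msF μ ((Bm 0)ᶜ) := by
    intro m
    induction m with
    | zero => intro _; rw [pow_zero, one_mul]
    | succ m ih =>
      intro hm
      have h1 := hstep m hm
      have h2 := ih (by omega)
      have h3 : (0:ℝ) ≤ (1 + lam k) ^ m := pow_nonneg (by linarith) m
      calc (1 + lam k) ^ (m + 1) * msF μ ((Bm (m + 1))ᶜ)
          = (1 + lam k) ^ m * ((1 + lam k) * msF μ ((Bm (m + 1))ᶜ)) := by ring
        _ ≤ (1 + lam k) ^ m * msF μ ((Bm m)ᶜ) := mul_le_mul_of_nonneg_left h1 h3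
        _ ≤ msF μ ((Bm 0)ᶜ) := h2
  have hd0 : msF μ ((Bm 0)ᶜ) ≤ 1 - msF μ B := by
    have h1 : msF μ ((Bm 0)ᶜ) ≤ msF μ Bᶜ :=
      msF_mono μ hμ0 (Set.compl_subset_compl.mpr (hBBm 0))
    have h2 : msF μ Bᶜ = 1 - msF μ B := by rw [msF_compl, hμ1]
    linarith
  have hfin : (1 + lam k) ^ n * msF μ ((Bm n)ᶜ) ≤ 1 - msF μ B :=
    le_trans (hiter n le_rfl) hd0
  have hpos : (0:ℝ) < (1 + lam k) ^ n := pow_pos (by linarith) n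
  have hcompl : msF μ ((Bm n)ᶜ) = 1 - msF μ (Bm n) := by rw [msF_compl, hμ1]
  show 1 - (1 - msF μ B) * ((1 + lam k) ^ n)⁻¹ ≤ msF μ (Bm n)
  have h6 : 1 - msF μ (Bm n) ≤ (1 - msF μ B) * ((1 + lam k) ^ n)⁻¹ := by
    rw [← div_eq_mul_inv, le_div_iff₀ hpos]
    rw [hcompl] at hfin
    linarith [hfin]
  linarith
end

section
/- Let E be a finite set, p an irreducible Markov transition kernel on E admitting a reversible probability measure μ, and let d be the graph distance induced by the edges {x,y : p(x,y) > 0}. Let λ^{(k)} be the k-th eigenvalue (in increasing order, with multiplicity, starting from λ^{(0)} = 0) of −L = I − p on L²(μ). Let A₁,…,A_k ⊆ E satisfy d(A_i,A_j) ≥ 2 for i ≠ j and (μ(A₁),…,μ(A_k)) ∈ Δ_k, and set B = A₁ ∪ ⋯ ∪ A_k. Then (1 + λ^{(k)})·(1 − μ(B₁)) ≤ 1 − μ(B), where B₁ = {x ∈ E : d(x,B) < 1} is the 1-enlargement of B. -/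
open scoped BigOperators

open Matrix in
/-- Completeness/Parseval identity for an orthonormal family of full size. -/
lemma aux_key {E : Type} [Fintype E] [DecidableEq E] (μ : E → ℝ) (hμ0 : ∀ x, 0 ≤ μ x)
    (ψ : E → E → ℝ)
    (horth : ∀ a b, (∑ x, ψ a x * ψ b x * μ x) = if a = b then 1 else 0)
    (u v : E → ℝ) :
    (∑ a, (∑ x, u x * ψ a x * μ x) * (∑ x, v x * ψ a x * μ x))
      = ∑ x, u x * v x * μ x := by
  classical
  set Φ : Matrix E E ℝ := Matrix.of (fun a x => ψ a x * Real.sqrt (μ x)) with hΦ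
  have hsq : ∀ x, Real.sqrt (μ x) * Real.sqrt (μ x) = μ x := fun x => Real.mul_self_sqrt (hμ0 x)
  have h1 : Φ * Φ.transpose = 1 := by
    ext a b
    simp only [Matrix.mul_apply, Matrix.transpose_apply, Matrix.one_apply, hΦ, Matrix.of_apply]
    rw [← horth a b]
    refine Finset.sum_congr rfl fun x _ => ?_
    linear_combination (ψ a x * ψ b x) * hsq x
  have h2 : Φ.transpose * Φ = 1 := mul_eq_one_comm.mp h1
  set U : E → ℝ := fun x => u x * Real.sqrt (μ x) with hU
  set V : E → ℝ := fun x => v x * Real.sqrt (μ x) with hV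
  have hu : ∀ a, (∑ x, u x * ψ a x * μ x) = (Φ *ᵥ U) a := by
    intro a
    simp only [Matrix.mulVec, dotProduct, hΦ, Matrix.of_apply, hU]
    refine Finset.sum_congr rfl fun x _ => ?_
    linear_combination (-(u x * ψ a x)) * hsq x
  have hv : ∀ a, (∑ x, v x * ψ a x * μ x) = (Φ *ᵥ V) a := by
    intro a
    simp only [Matrix.mulVec, dotProduct, hΦ, Matrix.of_apply, hV]
    refine Finset.sum_congr rfl fun x _ => ?_
    linear_combination (-(v x * ψ a x)) * hsq x
  calc (∑ a, (∑ x, u x * ψ a x * μ x) * (∑ x, v x * ψ a x * μ x))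
      = (Φ *ᵥ U) ⬝ᵥ (Φ *ᵥ V) := by
        simp only [dotProduct]
        exact Finset.sum_congr rfl fun a _ => by rw [hu a, hv a]
    _ = ((Φ *ᵥ U) ᵥ* Φ) ⬝ᵥ V := Matrix.dotProduct_mulVec _ _ _
    _ = ((U ᵥ* Φ.transpose) ᵥ* Φ) ⬝ᵥ V := by rw [Matrix.vecMul_transpose]
    _ = (U ᵥ* (Φ.transpose * Φ)) ⬝ᵥ V := by rw [Matrix.vecMul_vecMul]
    _ = U ⬝ᵥ V := by rw [h2, Matrix.vecMul_one]
    _ = ∑ x, u x * v x * μ x := by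
        simp only [dotProduct, hU, hV]
        refine Finset.sum_congr rfl fun x _ => ?_
        linear_combination (u x * v x) * hsq x


open Matrix

/-- One-step inequality `(1 + λ⁽ᵏ⁾)(1 - μ(B₁)) ≤ 1 - μ(B)` for a reversible irreducible
Markov chain on a finite state space, where `B₁` is `B` together with its graph neighbours. -/
theorem stmt16 {E : Type} [Fintype E] [DecidableEq E] [Nonempty E]
    (p : Matrix E E ℝ) (hp0 : ∀ x y, 0 ≤ p x y) (hp1 : ∀ x, ∑ y, p x y = 1)
    (hirr : ∀ x y : E, ∃ n : ℕ, 0 < (p ^ n) x y)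
    (μ : E → ℝ) (hμ0 : ∀ x, 0 ≤ μ x) (hμ1 : ∑ x, μ x = 1)
    (hrev : ∀ x y, p x y * μ x = p y x * μ y)
    (lam : ℕ → ℝ) (φ : ℕ → E → ℝ)
    (hlam0 : lam 0 = 0)
    (hmono : ∀ i j, i ≤ j → j < Fintype.card E → lam i ≤ lam j)
    (hortho : ∀ i j, i < Fintype.card E → j < Fintype.card E →
      (∑ x, φ i x * φ j x * μ x) = if i = j then 1 else 0)
    (heig : ∀ i, i < Fintype.card E → ∀ x, φ i x - ∑ y, p x y * φ i y = lam i * φ i x)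
    (k : ℕ) (hk : 1 ≤ k) (hkcard : k < Fintype.card E)
    (A : Fin k → Set E)
    (hsep : ∀ i j, i ≠ j → ∀ x ∈ A i, ∀ y ∈ A j, 2 ≤ (markovGraph p).dist x y)
    (hΔ : memDelta (fun i => msF μ (A i))) :
    (1 + lam k) *
        (1 - msF μ {x | ∃ y ∈ ⋃ i, A i, (markovGraph p).dist x y ≤ 1}) ≤
      1 - msF μ (⋃ i, A i) := by
  classical
  set B : Set E := ⋃ i, A i with hBdef
  set B1 : Set E := {x | ∃ y ∈ B, (markovGraph p).dist x y ≤ 1} with hB1def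
  -- basic graph facts
  have hadj : ∀ x y : E, x ≠ y → 0 < p x y → (markovGraph p).Adj x y := by
    intro x y hne hpos
    rw [markovGraph, SimpleGraph.fromRel_adj]
    exact ⟨hne, Or.inl hpos⟩
  have hdist1 : ∀ x y : E, (markovGraph p).Adj x y → (markovGraph p).dist x y ≤ 1 := by
    intro x y h
    simpa using SimpleGraph.dist_le (SimpleGraph.Walk.cons h SimpleGraph.Walk.nil)
  have hBsub : B ⊆ B1 := by
    intro x hx
    exact ⟨x, hx, by simp [SimpleGraph.dist_self]⟩
  have hAdisj : ∀ i j, i ≠ j → ∀ x, x ∈ A i → x ∈ A j → False := by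
    intro i j hij x hxi hxj
    have := hsep i j hij x hxi x hxj
    simp [SimpleGraph.dist_self] at this
  have hedgeA : ∀ (i : Fin k) (x y : E), x ∈ A i → 0 < p x y → y ∉ A i → y ∈ B1 \ B := by
    intro i x y hx hpos hy
    have hxy : x ≠ y := fun h => hy (h ▸ hx)
    have hadjxy := hadj x y hxy hpos
    have hd : (markovGraph p).dist y x ≤ 1 := by
      rw [SimpleGraph.dist_comm]; exact hdist1 x y hadjxy
    refine ⟨⟨x, Set.mem_iUnion.mpr ⟨i, hx⟩, hd⟩, fun hyB => ?_⟩
    obtain ⟨j, hyj⟩ := Set.mem_iUnion.mp hyB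
    by_cases hji : j = i
    · exact hy (hji ▸ hyj)
    · have h2 := hsep i j (fun h => hji h.symm) x hx y hyj
      have hd2 : (markovGraph p).dist x y ≤ 1 := hdist1 x y hadjxy
      omega
  have hedge0 : ∀ x y : E, x ∉ B1 → 0 < p x y → y ∈ B1 → y ∈ B1 \ B := by
    intro x y hx hpos hy
    refine ⟨hy, fun hyB => hx ?_⟩
    have hxy : x ≠ y := fun h => hx (h ▸ hBsub hyB)
    exact ⟨y, hyB, hdist1 x y (hadj x y hxy hpos)⟩
  -- invariance of μ
  have hinv : ∀ y, (∑ x, μ x * p x y) = μ y := by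
    intro y
    calc (∑ x, μ x * p x y) = ∑ x, μ y * p y x := by
          refine Finset.sum_congr rfl fun x _ => ?_
          linear_combination hrev x y
      _ = μ y * ∑ x, p y x := by rw [Finset.mul_sum]
      _ = μ y := by rw [hp1]; ring
  -- reindexed eigenfunctions
  set e : E ≃ Fin (Fintype.card E) := Fintype.equivFin E with hedef
  set ψ : E → E → ℝ := fun a => φ (e a) with hψdef
  have horthψ : ∀ a b, (∑ x, ψ a x * ψ b x * μ x) = if a = b then 1 else 0 := by
    intro a b
    rw [hψdef]
    rw [hortho (e a) (e b) (e a).isLt (e b).isLt]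
    simp [Fin.val_inj]
  -- the test sets
  set S : Fin (k + 1) → Set E := Fin.cons B1ᶜ A with hSdef
  have hS0 : S 0 = B1ᶜ := by rw [hSdef]; exact Fin.cons_zero _ _
  have hSsucc : ∀ i : Fin k, S i.succ = A i := by
    intro i; rw [hSdef]; exact Fin.cons_succ _ _ _
  have hSdisj : ∀ j j' : Fin (k + 1), j ≠ j' → ∀ x, x ∈ S j → x ∈ S j' → False := by
    intro j j' hne x hx hx'
    induction j using Fin.cases with
    | zero =>
      induction j' using Fin.cases with
      | zero => exact hne rfl
      | succ i =>
        rw [hS0] at hx; rw [hSsucc] at hx'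
        exact hx (hBsub (Set.mem_iUnion.mpr ⟨i, hx'⟩))
    | succ i =>
      induction j' using Fin.cases with
      | zero =>
        rw [hS0] at hx'; rw [hSsucc] at hx
        exact hx' (hBsub (Set.mem_iUnion.mpr ⟨i, hx⟩))
      | succ i' =>
        rw [hSsucc] at hx hx'
        exact hAdisj i i' (fun h => hne (by rw [h])) x hx hx'
  -- coefficient vector
  set N : Matrix (Fin k) (Fin (k + 1)) ℝ :=
    Matrix.of (fun j i => ∑ x, (S i).indicator (fun x => φ (j : ℕ) x * μ x) x) with hNdef
  have hnotinj : ¬ Function.Injective N.mulVecLin := by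
    intro h
    have h2 := LinearMap.finrank_le_finrank_of_injective h
    rw [Module.finrank_fin_fun, Module.finrank_fin_fun] at h2
    omega
  obtain ⟨c1, c2, hceq, hcne⟩ := Function.not_injective_iff.mp hnotinj
  set c : Fin (k + 1) → ℝ := c1 - c2 with hcdef
  have hc0 : c ≠ 0 := sub_ne_zero.mpr hcne
  have hNc : N *ᵥ c = 0 := by
    have h3 : N.mulVecLin c1 - N.mulVecLin c2 = 0 := by rw [hceq]; simp
    rw [← map_sub] at h3
    simpa [Matrix.mulVecLin_apply, hcdef] using h3
  -- the test function
  obtain ⟨f, hfdef⟩ : ∃ f : E → ℝ, f = fun x => ∑ j, (S j).indicator (fun _ => c j) x := ⟨_, rfl⟩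
  have hfmem : ∀ (j) (x : E), x ∈ S j → f x = c j := by
    intro j x hx
    simp only [hfdef]
    rw [Finset.sum_eq_single j]
    · simp [Set.indicator_of_mem hx]
    · intro j' _ hj'
      exact Set.indicator_of_notMem (fun hx' => hSdisj j' j hj' x hx' hx) _
    · intro h; exact absurd (Finset.mem_univ j) h
  have hfnot : ∀ x : E, (∀ j, x ∉ S j) → f x = 0 := by
    intro x hx
    simp only [hfdef]
    exact Finset.sum_eq_zero fun j _ => Set.indicator_of_notMem (hx j) _
  -- orthogonality of f to the first k eigenfunctions
  have horthf : ∀ j : Fin k, (∑ x, f x * φ (j : ℕ) x * μ x) = 0 := by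
    intro j
    have hswap : (∑ x, f x * φ (j : ℕ) x * μ x) = ∑ i, c i * N j i := by
      simp only [hfdef]
      calc (∑ x, (∑ i, (S i).indicator (fun _ => c i) x) * φ (j : ℕ) x * μ x)
          = ∑ x, ∑ i, (S i).indicator (fun _ => c i) x * (φ (j : ℕ) x * μ x) := by
            refine Finset.sum_congr rfl fun x _ => ?_
            rw [Finset.sum_mul, Finset.sum_mul]
            exact Finset.sum_congr rfl fun i _ => by ring
        _ = ∑ i, ∑ x, (S i).indicator (fun _ => c i) x * (φ (j : ℕ) x * μ x) :=
            Finset.sum_comm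
        _ = ∑ i, c i * N j i := by
            refine Finset.sum_congr rfl fun i _ => ?_
            rw [hNdef, Matrix.of_apply, Finset.mul_sum]
            refine Finset.sum_congr rfl fun x _ => ?_
            by_cases hx : x ∈ S i
            · rw [Set.indicator_of_mem hx, Set.indicator_of_mem hx]
            · rw [Set.indicator_of_notMem hx, Set.indicator_of_notMem hx, zero_mul, mul_zero]
    have hz : (N *ᵥ c) j = 0 := by rw [hNc]; rfl
    rw [Matrix.mulVec, dotProduct] at hz
    rw [hswap, ← hz]
    exact Finset.sum_congr rfl fun i _ => by ring
  -- coefficients of f in the eigenbasis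
  obtain ⟨b, hbdef⟩ : ∃ b : E → ℝ, b = fun a => ∑ x, f x * ψ a x * μ x := ⟨_, rfl⟩
  have hb0 : ∀ a : E, ((e a : ℕ) < k) → b a = 0 := by
    intro a ha
    have h := horthf ⟨(e a : ℕ), ha⟩
    simpa [hbdef, hψdef] using h
  obtain ⟨g, hgdef⟩ : ∃ g : E → ℝ, g = fun x => f x - ∑ y, p x y * f y := ⟨_, rfl⟩
  have hgψ : ∀ a : E, (∑ x, g x * ψ a x * μ x) = lam (e a) * b a := by
    intro a
    have hlt : ((e a : ℕ)) < Fintype.card E := (e a).isLt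
    have hstep : ∀ y, (∑ x, p y x * ψ a x) = ψ a y - lam (e a) * ψ a y := by
      intro y
      simp only [hψdef]
      linarith [heig ((e a : ℕ)) hlt y]
    have hcross : (∑ x, (∑ y, p x y * f y) * ψ a x * μ x)
        = ∑ y, f y * ((∑ x, p y x * ψ a x)) * μ y := by
      calc (∑ x, (∑ y, p x y * f y) * ψ a x * μ x)
          = ∑ x, ∑ y, f y * (p y x * ψ a x) * μ y := by
            refine Finset.sum_congr rfl fun x _ => ?_
            rw [Finset.sum_mul, Finset.sum_mul]
            refine Finset.sum_congr rfl fun y _ => ?_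
            linear_combination (f y * ψ a x) * hrev x y
        _ = ∑ y, ∑ x, f y * (p y x * ψ a x) * μ y := Finset.sum_comm
        _ = ∑ y, f y * ((∑ x, p y x * ψ a x)) * μ y := by
            refine Finset.sum_congr rfl fun y _ => ?_
            rw [Finset.mul_sum, Finset.sum_mul]
    calc (∑ x, g x * ψ a x * μ x)
        = (∑ x, f x * ψ a x * μ x) - ∑ x, (∑ y, p x y * f y) * ψ a x * μ x := by
          simp only [hgdef]
          rw [← Finset.sum_sub_distrib]
          exact Finset.sum_congr rfl fun x _ => by ring
      _ = b a - ∑ y, f y * (ψ a y - lam (e a) * ψ a y) * μ y := by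
          rw [hcross, hbdef]
          simp only []
          refine congrArg _ (Finset.sum_congr rfl fun y _ => ?_)
          rw [hstep y]
      _ = lam (e a) * b a := by
          rw [hbdef]
          simp only []
          rw [Finset.mul_sum, ← Finset.sum_sub_distrib]
          exact Finset.sum_congr rfl fun y _ => by ring
  -- Parseval
  have hff : (∑ x, f x * f x * μ x) = ∑ a, b a * b a := by
    simp only [hbdef]
    exact (aux_key μ hμ0 ψ horthψ f f).symm
  have hfg : (∑ x, f x * g x * μ x) = ∑ a, b a * (lam (e a) * b a) := by
    rw [← aux_key μ hμ0 ψ horthψ f g]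
    refine Finset.sum_congr rfl fun a _ => ?_
    rw [hgψ a]
    simp only [hbdef]
  have hlamk : 0 ≤ lam k := by rw [← hlam0]; exact hmono 0 k (Nat.zero_le k) hkcard
  have hlower : lam k * (∑ x, f x * f x * μ x) ≤ ∑ x, f x * g x * μ x := by
    rw [hff, hfg, Finset.mul_sum]
    refine Finset.sum_le_sum fun a _ => ?_
    by_cases ha : ((e a : ℕ)) < k
    · rw [hb0 a ha]; simp
    · have h1 : lam k ≤ lam (e a) := hmono k (e a) (le_of_not_gt ha) (e a).isLt
      nlinarith [mul_self_nonneg (b a)]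
  -- maximal coefficient
  obtain ⟨j0, -, hj0⟩ :=
    Finset.exists_max_image Finset.univ (fun j => (c j) ^ 2) ⟨0, Finset.mem_univ 0⟩
  have hm2pos : 0 < (c j0) ^ 2 := by
    obtain ⟨j1, hj1⟩ := Function.ne_iff.mp hc0
    exact lt_of_lt_of_le
      (lt_of_le_of_ne (sq_nonneg _) (Ne.symm (pow_ne_zero 2 hj1)))
      (hj0 j1 (Finset.mem_univ j1))
  -- energy upper bound
  have hub : (∑ x, f x * g x * μ x) ≤ (c j0) ^ 2 * msF μ (B1 \ B) := by
    have step1 : (∑ x, f x * g x * μ x)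
        = ∑ x, ∑ y, μ x * p x y * (f x * f x - f x * f y) := by
      refine Finset.sum_congr rfl fun x _ => ?_
      have hgx : g x = f x - ∑ y, p x y * f y := by rw [hgdef]
      have h1 : (∑ y, μ x * p x y * (f x * f x - f x * f y))
          = (f x * f x * μ x) * (∑ y, p x y) - (f x * μ x) * (∑ y, p x y * f y) := by
        rw [Finset.mul_sum, Finset.mul_sum, ← Finset.sum_sub_distrib]
        exact Finset.sum_congr rfl fun y _ => by ring
      rw [hgx, h1, hp1 x]
      ring
    have step2 : ∀ x y : E, μ x * p x y * (f x * f x - f x * f y)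
        ≤ (if y ∈ B1 \ B then μ x * p x y * (c j0) ^ 2 else 0) := by
      intro x y
      have hrhs : (0:ℝ) ≤ (if y ∈ B1 \ B then μ x * p x y * (c j0) ^ 2 else 0) := by
        split
        · exact mul_nonneg (mul_nonneg (hμ0 x) (hp0 x y)) (sq_nonneg _)
        · exact le_refl 0
      by_cases hx : ∃ j, x ∈ S j
      · obtain ⟨j, hxj⟩ := hx
        have hfx := hfmem j x hxj
        by_cases hy : y ∈ S j
        · have hz : μ x * p x y * (f x * f x - f x * f y) = 0 := by
            rw [hfx, hfmem j y hy]; ring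
          exact hz.le.trans hrhs
        · by_cases hpxy : 0 < p x y
          · have hyM : y ∈ B1 \ B := by
              rcases Fin.eq_zero_or_eq_succ j with h | ⟨i, rfl⟩
              · subst h
                rw [hS0] at hxj hy
                exact hedge0 x y hxj hpxy (not_not.mp hy)
              · rw [hSsucc] at hxj hy
                exact hedgeA i x y hxj hpxy hy
            have hfy : f y = 0 := by
              apply hfnot
              intro j'
              rcases Fin.eq_zero_or_eq_succ j' with h | ⟨i', rfl⟩
              · subst h; rw [hS0]; intro hcon; exact hcon hyM.1
              · rw [hSsucc]; intro hcon; exact hyM.2 (Set.mem_iUnion.mpr ⟨i', hcon⟩)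
            rw [if_pos hyM, hfx, hfy]
            have hle : c j * c j - c j * 0 ≤ (c j0) ^ 2 := by
              have h2 := hj0 j (Finset.mem_univ j)
              nlinarith
            exact mul_le_mul_of_nonneg_left hle (mul_nonneg (hμ0 x) (hp0 x y))
          · have hz0 : p x y = 0 := le_antisymm (not_lt.mp hpxy) (hp0 x y)
            have hz : μ x * p x y * (f x * f x - f x * f y) = 0 := by rw [hz0]; ring
            exact hz.le.trans hrhs
      · push_neg at hx
        have hz : μ x * p x y * (f x * f x - f x * f y) = 0 := by
          rw [hfnot x hx]; ring
        exact hz.le.trans hrhs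
    calc (∑ x, f x * g x * μ x)
        = ∑ x, ∑ y, μ x * p x y * (f x * f x - f x * f y) := step1
      _ ≤ ∑ x, ∑ y, (if y ∈ B1 \ B then μ x * p x y * (c j0) ^ 2 else 0) :=
          Finset.sum_le_sum fun x _ => Finset.sum_le_sum fun y _ => step2 x y
      _ = ∑ y, ∑ x, (if y ∈ B1 \ B then μ x * p x y * (c j0) ^ 2 else 0) := Finset.sum_comm
      _ = ∑ y, (B1 \ B).indicator μ y * (c j0) ^ 2 := by
          refine Finset.sum_congr rfl fun y _ => ?_
          by_cases hy : y ∈ B1 \ B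
          · rw [Set.indicator_of_mem hy]
            simp only [if_pos hy]
            calc (∑ x, μ x * p x y * (c j0) ^ 2)
                = (∑ x, μ x * p x y) * (c j0) ^ 2 := by rw [Finset.sum_mul]
              _ = μ y * (c j0) ^ 2 := by rw [hinv y]
          · rw [Set.indicator_of_notMem hy, zero_mul]
            exact Finset.sum_eq_zero fun x _ => if_neg hy
      _ = (c j0) ^ 2 * msF μ (B1 \ B) := by
          rw [msF, Finset.mul_sum]
          exact Finset.sum_congr rfl fun y _ => by ring
  -- complements and sums of measures
  have hcompl : ∀ T : Set E, msF μ T + msF μ Tᶜ = 1 := by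
    intro T
    rw [msF, msF, ← Finset.sum_add_distrib, ← hμ1]
    refine Finset.sum_congr rfl fun x _ => ?_
    by_cases hx : x ∈ T <;> simp [Set.indicator_apply, hx]
  have hmsF_mono : ∀ T T' : Set E, T ⊆ T' → msF μ T ≤ msF μ T' := by
    intro T T' h
    exact Finset.sum_le_sum fun x _ => Set.indicator_le_indicator_of_subset h hμ0 x
  have hBsum : msF μ B = ∑ i, msF μ (A i) := by
    simp only [msF]
    calc (∑ x, B.indicator μ x) = ∑ x, ∑ i, (A i).indicator μ x := by
          refine Finset.sum_congr rfl fun x _ => ?_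
          by_cases hx : x ∈ B
          · obtain ⟨i, hi⟩ := Set.mem_iUnion.mp hx
            rw [Set.indicator_of_mem hx, Finset.sum_eq_single i]
            · rw [Set.indicator_of_mem hi]
            · intro j _ hj
              exact Set.indicator_of_notMem (fun hxj => hAdisj j i hj x hxj hi) _
            · intro h; exact absurd (Finset.mem_univ i) h
          · rw [Set.indicator_of_notMem hx]
            exact (Finset.sum_eq_zero fun i _ =>
              Set.indicator_of_notMem
                (fun hxi => hx (Set.mem_iUnion.mpr ⟨i, hxi⟩)) _).symm
      _ = ∑ i, ∑ x, (A i).indicator μ x := Finset.sum_comm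
  have hA_ge : ∀ i : Fin k, msF μ B1ᶜ ≤ msF μ (A i) := by
    intro i
    have h1 := hΔ.2.2 i
    simp only [] at h1
    have h2 := hcompl B1
    have h3 := hmsF_mono B B1 hBsub
    rw [hBsum] at h3
    linarith
  have hlb : (c j0) ^ 2 * msF μ B1ᶜ ≤ ∑ x, f x * f x * μ x := by
    have h1 : (c j0) ^ 2 * msF μ (S j0) ≤ ∑ x, f x * f x * μ x := by
      rw [msF, Finset.mul_sum]
      refine Finset.sum_le_sum fun x _ => ?_
      by_cases hx : x ∈ S j0
      · rw [Set.indicator_of_mem hx, hfmem j0 x hx]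
        exact le_of_eq (by ring)
      · rw [Set.indicator_of_notMem hx, mul_zero]
        exact mul_nonneg (mul_self_nonneg _) (hμ0 x)
    have h2 : msF μ B1ᶜ ≤ msF μ (S j0) := by
      rcases Fin.eq_zero_or_eq_succ j0 with h | ⟨i, rfl⟩
      · subst h; rw [hS0]
      · rw [hSsucc]; exact hA_ge i
    calc (c j0) ^ 2 * msF μ B1ᶜ ≤ (c j0) ^ 2 * msF μ (S j0) :=
          mul_le_mul_of_nonneg_left h2 (sq_nonneg _)
      _ ≤ _ := h1
  have hMsplit : msF μ Bᶜ = msF μ B1ᶜ + msF μ (B1 \ B) := by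
    simp only [msF]
    rw [← Finset.sum_add_distrib]
    refine Finset.sum_congr rfl fun x _ => ?_
    by_cases hx : x ∈ B
    · have h1 : x ∈ B1 := hBsub hx
      rw [Set.indicator_of_notMem (Set.notMem_compl_iff.mpr hx),
        Set.indicator_of_notMem (Set.notMem_compl_iff.mpr h1),
        Set.indicator_of_notMem (fun h => h.2 hx), add_zero]
    · by_cases hx1 : x ∈ B1
      · rw [Set.indicator_of_mem (Set.mem_compl hx),
          Set.indicator_of_notMem (Set.notMem_compl_iff.mpr hx1),
          Set.indicator_of_mem (show x ∈ B1 \ B from ⟨hx1, hx⟩), zero_add]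
      · rw [Set.indicator_of_mem (Set.mem_compl hx), Set.indicator_of_mem (Set.mem_compl hx1),
          Set.indicator_of_notMem (fun h => hx1 h.1), add_zero]
  have hkey : lam k * msF μ B1ᶜ ≤ msF μ (B1 \ B) := by
    have hchain : lam k * ((c j0) ^ 2 * msF μ B1ᶜ) ≤ (c j0) ^ 2 * msF μ (B1 \ B) := by
      calc lam k * ((c j0) ^ 2 * msF μ B1ᶜ)
          ≤ lam k * (∑ x, f x * f x * μ x) := mul_le_mul_of_nonneg_left hlb hlamk
        _ ≤ ∑ x, f x * g x * μ x := hlower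
        _ ≤ (c j0) ^ 2 * msF μ (B1 \ B) := hub
    nlinarith [hchain, hm2pos]
  have g1 : 1 - msF μ B1 = msF μ B1ᶜ := by linarith [hcompl B1]
  have g2 : 1 - msF μ B = msF μ B1ᶜ + msF μ (B1 \ B) := by linarith [hcompl B, hMsplit]
  rw [g1, g2]
  nlinarith [hkey]
end

section
/- Let (E,d) be a metric space with a Borel probability measure μ satisfying the multi-set concentration of measure property of order k with concentration profile α_k, and let f : E → ℝ be 1-Lipschitz. If I₁,…,I_k ⊆ ℝ are k disjoint Borel sets such that (μ(f ∈ I₁),…,μ(f ∈ I_k)) ∈ Δ_k, then μ(f ∈ ∪_{i=1}^k I_{i,r}) ≥ 1 − (1 − μ(f ∈ ∪_{i=1}^k I_i))·α_k(r) for all 0 < r ≤ (1/2)·min_{i≠j} d(I_i,I_j), where I_{i,r} is the r-enlargement of I_i in ℝ and d(I_i,I_j) = inf{|s−t| : s ∈ I_i, t ∈ I_j}. -/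
open MeasureTheory

/-- Proposition `prop:conc-quantile`: multi-set deviation inequality for the values of a
1-Lipschitz function, under the multi-set concentration property of order `k`
with profile `αk`. -/
theorem stmt18 {E : Type*} [MetricSpace E] [MeasurableSpace E] [BorelSpace E]
    (μ : Measure E) [IsProbabilityMeasure μ]
    (k : ℕ) (hk : 1 ≤ k) (αk : ℝ → ℝ) (hαk : ∀ x, 0 ≤ x → 0 ≤ αk x)
    (hconc : ∀ A : Fin k → Set E, (∀ i, MeasurableSet (A i)) →
      memDelta (fun i => (μ (A i)).toReal) →
      ∀ r : ℝ, 0 < r → (∀ i j, i ≠ j → 2 * r ≤ distSet (A i) (A j)) →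
      1 - (1 - (μ (⋃ i, A i)).toReal) * αk r ≤
        (μ (Metric.thickening r (⋃ i, A i))).toReal)
    (f : E → ℝ) (hf : LipschitzWith 1 f)
    (I : Fin k → Set ℝ) (hI : ∀ i, MeasurableSet (I i))
    (hdisj : ∀ i j, i ≠ j → Disjoint (I i) (I j))
    (hΔ : memDelta (fun i => (μ (f ⁻¹' I i)).toReal)) :
    ∀ r : ℝ, 0 < r → (∀ i j, i ≠ j → 2 * r ≤ distSet (I i) (I j)) →
      1 - (1 - (μ (f ⁻¹' ⋃ i, I i)).toReal) * αk r ≤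
        (μ (f ⁻¹' ⋃ i, Metric.thickening r (I i))).toReal := by
  intro r hr hdist
  set A : Fin k → Set E := fun i => f ⁻¹' I i with hA
  have hfm : Measurable f := hf.continuous.measurable
  have hAm : ∀ i, MeasurableSet (A i) := fun i => (hI i).preimage hfm
  -- the union of preimages
  have hUnion : (⋃ i, A i) = f ⁻¹' ⋃ i, I i := by
    simp [hA, Set.preimage_iUnion]
  -- target set contains the thickening of the union
  have hsub : Metric.thickening r (⋃ i, A i) ⊆ f ⁻¹' ⋃ i, Metric.thickening r (I i) := by
    intro x hx
    rw [Metric.mem_thickening_iff] at hx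
    obtain ⟨y, hy, hxy⟩ := hx
    obtain ⟨i, hyi⟩ := Set.mem_iUnion.mp hy
    refine Set.mem_preimage.mpr (Set.mem_iUnion.mpr ⟨i, ?_⟩)
    rw [Metric.mem_thickening_iff]
    exact ⟨f y, hyi, lt_of_le_of_lt (by simpa using hf.dist_le_mul x y) hxy⟩
  have hmono : (μ (Metric.thickening r (⋃ i, A i))).toReal ≤
      (μ (f ⁻¹' ⋃ i, Metric.thickening r (I i))).toReal :=
    ENNReal.toReal_mono (measure_ne_top μ _) (measure_mono hsub)
  by_cases hne : ∀ i, (A i).Nonempty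
  · -- apply the concentration hypothesis
    have hd : ∀ i j, i ≠ j → 2 * r ≤ distSet (A i) (A j) := by
      intro i j hij
      refine le_csInf ((Set.image2_nonempty_iff).mpr ⟨hne i, hne j⟩) ?_
      rintro d ⟨x, hx, y, hy, rfl⟩
      have h1 : distSet (I i) (I j) ≤ dist (f x) (f y) := by
        rw [distSet]
        apply csInf_le ?_ (Set.mem_image2_of_mem (show f x ∈ I i from hx) (show f y ∈ I j from hy))
        refine ⟨0, ?_⟩
        rintro d ⟨a, _, b, _, rfl⟩
        exact dist_nonneg
      have h2 : dist (f x) (f y) ≤ dist x y := by simpa using hf.dist_le_mul x y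
      exact le_trans (hdist i j hij) (le_trans h1 h2)
    rw [← hUnion]
    exact le_trans (hconc A hAm hΔ r hr hd) hmono
  · -- some preimage is empty: then the union has full measure
    push_neg at hne
    obtain ⟨i, hi⟩ := hne
    obtain ⟨hpos, hsum, hlow⟩ := hΔ
    have hai : (μ (A i)).toReal = 0 := by rw [hi]; simp
    have hsum1 : ∑ j, (μ (A j)).toReal = 1 := by
      have := hlow i
      simp only [hai] at this
      linarith [this, hsum]
    -- union is measurable and has measure 1
    have hdisjA : Pairwise (Function.onFun Disjoint A) := by
      intro a b hab
      exact (hdisj a b hab).preimage f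
    have hμU : μ (⋃ j, A j) = ∑ j, μ (A j) := by
      rw [measure_iUnion hdisjA hAm, tsum_fintype]
    have hμU1 : (μ (⋃ j, A j)).toReal = 1 := by
      rw [hμU]
      rw [ENNReal.toReal_sum (fun j _ => measure_ne_top μ _)] at *
      exact hsum1
    have hsub2 : (⋃ j, A j) ⊆ f ⁻¹' ⋃ j, Metric.thickening r (I j) := by
      refine le_trans ?_ hsub
      exact Metric.self_subset_thickening hr _
    have h1 : (1 : ℝ) ≤ (μ (f ⁻¹' ⋃ j, Metric.thickening r (I j))).toReal := by
      calc (1:ℝ) = (μ (⋃ j, A j)).toReal := hμU1.symm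
        _ ≤ _ := ENNReal.toReal_mono (measure_ne_top μ _) (measure_mono hsub2)
    have hμf : (μ (f ⁻¹' ⋃ j, I j)).toReal = 1 := by rw [← hUnion]; exact hμU1
    rw [hμf]
    simpa using h1
end

section
/- Let (E,d) be a metric space with a Borel probability measure μ satisfying the multi-set concentration of measure property of order k with concentration profile α_k, and let f : E → ℝ be 1-Lipschitz. Let A₁,…,A_k ⊆ E satisfy (μ(A₁),…,μ(A_k)) ∈ Δ_k and set A = A₁ ∪ ⋯ ∪ A_k. Then for any 1-Lipschitz function g : E → ℝ with g = f on A, it holds μ(|f−g| ≥ r) ≤ (1−μ(A))·α_k(r/2) for all 0 < r ≤ min_{i≠j} d(A_i,A_j). -/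
open MeasureTheory

/-- Proposition `prop:conc-extension`: error estimate for 1-Lipschitz extensions, under the
multi-set concentration property of order `k` with profile `αk`. -/
theorem stmt19 {E : Type*} [MetricSpace E] [MeasurableSpace E] [BorelSpace E]
    (μ : Measure E) [IsProbabilityMeasure μ]
    (k : ℕ) (hk : 1 ≤ k) (αk : ℝ → ℝ) (hαk : ∀ x, 0 ≤ x → 0 ≤ αk x)
    (hconc : ∀ A : Fin k → Set E, (∀ i, MeasurableSet (A i)) →
      memDelta (fun i => (μ (A i)).toReal) →
      ∀ r : ℝ, 0 < r → (∀ i j, i ≠ j → 2 * r ≤ distSet (A i) (A j)) →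
      1 - (1 - (μ (⋃ i, A i)).toReal) * αk r ≤
        (μ (Metric.thickening r (⋃ i, A i))).toReal)
    (f : E → ℝ) (hf : LipschitzWith 1 f)
    (A : Fin k → Set E) (hΔ : memDelta (fun i => (μ (A i)).toReal))
    (g : E → ℝ) (hg : LipschitzWith 1 g) (hfg : ∀ x ∈ ⋃ i, A i, g x = f x) :
    ∀ r : ℝ, 0 < r → (∀ i j, i ≠ j → r ≤ distSet (A i) (A j)) →
      (μ {x | r ≤ |f x - g x|}).toReal ≤
        (1 - (μ (⋃ i, A i)).toReal) * αk (r / 2) := by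
  intro r hr hd
  -- measurable replacements
  set B : Fin k → Set E := fun i => toMeasurable μ (A i) ∩ closure (A i) with hB
  have hAB : ∀ i, A i ⊆ B i := fun i =>
    Set.subset_inter (subset_toMeasurable μ (A i)) subset_closure
  have hBclos : ∀ i, B i ⊆ closure (A i) := fun i => Set.inter_subset_right
  have hBmeas : ∀ i, MeasurableSet (B i) := fun i =>
    (measurableSet_toMeasurable μ (A i)).inter isClosed_closure.measurableSet
  have hμB : ∀ i, μ (B i) = μ (A i) := fun i =>
    le_antisymm ((measure_mono Set.inter_subset_left).trans
      (measure_toMeasurable (A i)).le) (measure_mono (hAB i))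
  have hΔB : memDelta (fun i => (μ (B i)).toReal) := by
    have : (fun i => (μ (B i)).toReal) = fun i => (μ (A i)).toReal :=
      funext fun i => by rw [hμB]
    rw [this]; exact hΔ
  -- separation for B
  have hdB : ∀ i j, i ≠ j → 2 * (r / 2) ≤ distSet (B i) (B j) := by
    intro i j hij
    have hij' := hd i j hij
    rcases Set.eq_empty_or_nonempty (A i) with hi | hi
    · exfalso
      have : distSet (A i) (A j) = 0 := by
        simp [distSet, hi, Real.sInf_empty]
      linarith
    rcases Set.eq_empty_or_nonempty (A j) with hj | hj
    · exfalso
      have : distSet (A i) (A j) = 0 := by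
        simp [distSet, hj, Real.sInf_empty]
      linarith
    have hpair : ∀ a ∈ A i, ∀ b ∈ A j, r ≤ dist a b := by
      intro a ha b hb
      refine hij'.trans (csInf_le ⟨0, ?_⟩ ?_)
      · rintro d ⟨x, hx, y, hy, rfl⟩; exact dist_nonneg
      · exact ⟨a, ha, b, hb, rfl⟩
    rw [mul_div_cancel₀ _ (two_ne_zero)]
    refine le_csInf ⟨dist hi.choose hj.choose,
      hi.choose, hAB i hi.choose_spec, hj.choose, hAB j hj.choose_spec, rfl⟩ ?_
    rintro d ⟨x, hx, y, hy, rfl⟩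
    -- x ∈ closure (A i), y ∈ closure (A j)
    have hx' := hBclos i hx
    have hy' := hBclos j hy
    refine le_of_forall_pos_le_add fun ε hε => ?_
    obtain ⟨a, ha, hax⟩ := Metric.mem_closure_iff.mp hx' (ε/2) (by linarith)
    obtain ⟨b, hb, hby⟩ := Metric.mem_closure_iff.mp hy' (ε/2) (by linarith)
    have := hpair a ha b hb
    have h1 : dist a b ≤ dist a x + dist x y + dist y b := dist_triangle4 a x y b
    have hax' : dist a x = dist x a := dist_comm a x
    have hyb' : dist y b = dist y b := rfl
    rw [dist_comm] at hax
    linarith [dist_comm y b ▸ hby]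
  have hconcB := hconc B hBmeas hΔB (r/2) (by linarith) hdB
  -- thickening of ⋃ B is inside thickening of ⋃ A
  have hthick : Metric.thickening (r/2) (⋃ i, B i) ⊆ Metric.thickening (r/2) (⋃ i, A i) := by
    have h1 : (⋃ i, B i) ⊆ closure (⋃ i, A i) := by
      refine Set.iUnion_subset fun i => (hBclos i).trans (closure_mono ?_)
      exact Set.subset_iUnion A i
    calc Metric.thickening (r/2) (⋃ i, B i)
        ⊆ Metric.thickening (r/2) (closure (⋃ i, A i)) := Metric.thickening_subset_of_subset _ h1
      _ = Metric.thickening (r/2) (⋃ i, A i) := Metric.thickening_closure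
  -- the bad set avoids the thickening of ⋃ A
  have hsub : {x | r ≤ |f x - g x|} ⊆ (Metric.thickening (r/2) (⋃ i, A i))ᶜ := by
    intro x hx hxt
    obtain ⟨y, hy, hdy⟩ := Metric.mem_thickening_iff.mp hxt
    have hfy : g y = f y := hfg y hy
    have h1 : |f x - f y| ≤ dist x y := by
      have := hf.dist_le_mul x y
      rwa [NNReal.coe_one, one_mul, Real.dist_eq] at this
    have h2 : |g x - g y| ≤ dist x y := by
      have := hg.dist_le_mul x y
      rwa [NNReal.coe_one, one_mul, Real.dist_eq] at this
    have : |f x - g x| ≤ |f x - f y| + |g x - g y| := by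
      rw [← hfy] at h1 ⊢
      calc |f x - g x| = |(f x - g y) - (g x - g y)| := by ring_nf
        _ ≤ |f x - g y| + |g x - g y| := abs_sub _ _
    have hxs : r ≤ |f x - g x| := hx
    linarith
  -- arithmetic
  have hμsub : (μ {x | r ≤ |f x - g x|}).toReal ≤
      (μ (Metric.thickening (r/2) (⋃ i, A i))ᶜ).toReal :=
    ENNReal.toReal_mono (measure_ne_top μ _) (measure_mono hsub)
  have hcompl : (μ (Metric.thickening (r/2) (⋃ i, A i))ᶜ).toReal =
      1 - (μ (Metric.thickening (r/2) (⋃ i, A i))).toReal := by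
    rw [measure_compl Metric.isOpen_thickening.measurableSet (measure_ne_top μ _),
      measure_univ, ENNReal.toReal_sub_of_le prob_le_one ENNReal.one_ne_top,
      ENNReal.toReal_one]
  have htt : (μ (Metric.thickening (r/2) (⋃ i, B i))).toReal ≤
      (μ (Metric.thickening (r/2) (⋃ i, A i))).toReal :=
    ENNReal.toReal_mono (measure_ne_top μ _) (measure_mono hthick)
  have hμU : (μ (⋃ i, A i)).toReal ≤ (μ (⋃ i, B i)).toReal :=
    ENNReal.toReal_mono (measure_ne_top μ _)
      (measure_mono (Set.iUnion_mono hAB))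
  have hα : 0 ≤ αk (r/2) := hαk _ (by linarith)
  calc (μ {x | r ≤ |f x - g x|}).toReal
      ≤ 1 - (μ (Metric.thickening (r/2) (⋃ i, A i))).toReal := by
        rw [← hcompl]; exact hμsub
    _ ≤ 1 - (μ (Metric.thickening (r/2) (⋃ i, B i))).toReal := by linarith
    _ ≤ (1 - (μ (⋃ i, B i)).toReal) * αk (r/2) := by linarith [hconcB]
    _ ≤ (1 - (μ (⋃ i, A i)).toReal) * αk (r/2) := by nlinarith
end
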